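/- arXiv:2206.11852 — 4 statements merged into one kernel-verified Lean document; each statement's English description precedes it below -/
import Mathlib

section
/- GME of the qubit Lambda network: let p₁, p₂ ∈ [0,1] with p₁·p₂ > 1/3, and consider the four-qubit state ρ_{p₁} ⊗ ρ_{p₂}, where ρ_{p₁} is the 2-dimensional isotropic state on qubits A₁B and ρ_{p₂} on qubits A₂C. Regarded as a tripartite state of parties A (holding qubits A₁ and A₂), B, and C, this state is genuinely multipartite entangled, i.e. it is not biseparable with respect to the party bipartitions A|BC, B|AC, C|AB. -/
open Matrix Finset
open scoped ComplexOrder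

attribute [local instance] Classical.propDecidable

noncomputable section

/-- The rank-one matrix `|v⟩⟨v|` associated to a vector `v`. -/
def vecProj {D : Type*} [Fintype D] (v : D → ℂ) : Matrix D D ℂ :=
  Matrix.of fun i j => v i * star (v j)

/-- `v` is a unit vector. -/
def UnitVec {D : Type*} [Fintype D] (v : D → ℂ) : Prop :=
  ∑ i, star (v i) * v i = 1

/-- A quantum state: positive semidefinite matrix of trace one. -/
def IsState {D : Type*} [Fintype D] [DecidableEq D] (ρ : Matrix D D ℂ) : Prop :=
  ρ.PosSemidef ∧ ρ.trace = 1

/-- The maximally entangled vector `(1/√d) ∑ᵢ |ii⟩` on `ℂ^d ⊗ ℂ^d`. -/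
def maxEntVec (d : ℕ) : Fin d × Fin d → ℂ :=
  fun q => if q.1 = q.2 then (((Real.sqrt d)⁻¹ : ℝ) : ℂ) else 0

/-- The `d`-dimensional isotropic state with visibility `p`:
`ρ_p = p·φ_d⁺ + (1-p)·𝟙/d²`. -/
def isoState (d : ℕ) (p : ℝ) : Matrix (Fin d × Fin d) (Fin d × Fin d) ℂ :=
  (p : ℂ) • vecProj (maxEntVec d) +
    ((((1 - p) / (d ^ 2 : ℝ)) : ℝ) : ℂ) •
      (1 : Matrix (Fin d × Fin d) (Fin d × Fin d) ℂ)

/-- A vector on a tripartite system `α × β × γ` is product across one of the three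
bipartitions of the parties. -/
def ProdAcross3 {α β γ : Type*} (v : α × β × γ → ℂ) : Prop :=
  (∃ (f : α → ℂ) (g : β × γ → ℂ), ∀ q, v q = f q.1 * g q.2) ∨
  (∃ (f : β → ℂ) (g : α × γ → ℂ), ∀ q, v q = f q.2.1 * g (q.1, q.2.2)) ∨
  (∃ (f : γ → ℂ) (g : α × β → ℂ), ∀ q, v q = f q.2.2 * g (q.1, q.2.1))

/-- Biseparability of a tripartite state with parties `α`, `β`, `γ`. -/
def Bisep3 {α β γ : Type*} [Fintype α] [Fintype β] [Fintype γ]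
    (ρ : Matrix (α × β × γ) (α × β × γ) ℂ) : Prop :=
  ∃ (m : ℕ) (w : Fin m → ℝ) (u : Fin m → α × β × γ → ℂ),
    (∀ k, 0 ≤ w k) ∧ (∑ k, w k = 1) ∧
    (∀ k, UnitVec (u k) ∧ ProdAcross3 (u k)) ∧
    ρ = ∑ k, (w k : ℂ) • vecProj (u k)

/-- The Lambda network state: an isotropic state `ρ_{p₁}` on subsystems `A₁B` tensored
with an isotropic state `ρ_{p₂}` on subsystems `A₂C`, with indices grouped by party as
`(A₁ × A₂) × B × C`. -/
def lambdaNet (d : ℕ) (p₁ p₂ : ℝ) :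
    Matrix ((Fin d × Fin d) × Fin d × Fin d) ((Fin d × Fin d) × Fin d × Fin d) ℂ :=
  Matrix.of fun x y =>
    isoState d p₁ (x.1.1, x.2.1) (y.1.1, y.2.1) *
    isoState d p₂ (x.1.2, x.2.2) (y.1.2, y.2.2)

/-!
Write `Φ⁺ = ∑ᵢ |ii⟩` (unnormalised) and, for a vector `u` on `(A₁A₂)BC`, let `N = ‖u‖²`,
`S₁ = ‖(⟨Φ⁺|_{A₁B} ⊗ 𝟙) u‖²`, `S₂ = ‖(⟨Φ⁺|_{A₂C} ⊗ 𝟙) u‖²` and `S = |⟨Φ⁺ ⊗ Φ⁺|u⟩|²`.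
The witness `W = 𝟙 + 2φ⁺_{A₁B} + 2φ⁺_{A₂C} - 8φ⁺_{A₁B} ⊗ φ⁺_{A₂C}` has `⟨u|W|u⟩ = N + S₁ + S₂ - 2S`.
Cauchy–Schwarz gives `S ≤ 2S₁` and `S ≤ 2S₂` for every `u`; for a product across `A|BC` it
gives `S ≤ N`, across `B|AC` it gives `S ≤ S₂ ≤ 2N`, and across `C|AB` it gives `S ≤ S₁ ≤ 2N`.
In each case `2S ≤ N + S₁ + S₂`, so `Tr(Wσ) ≥ 0` for every biseparable `σ`, whereas
`Tr(W(ρ_{p₁} ⊗ ρ_{p₂})) = (3 - 9p₁p₂)/2 < 0`.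
-/

open Complex

lemma normSq_sum_mul_le {α : Type*} (s : Finset α) (f g : α → ℂ) :
    normSq (∑ i ∈ s, f i * g i) ≤ (∑ i ∈ s, normSq (f i)) * ∑ i ∈ s, normSq (g i) := by
  simp only [← Complex.sq_norm]
  calc ‖∑ i ∈ s, f i * g i‖ ^ 2 ≤ (∑ i ∈ s, ‖f i‖ * ‖g i‖) ^ 2 := by
        gcongr
        exact (norm_sum_le _ _).trans_eq (by simp only [norm_mul])
    _ ≤ _ := sum_mul_sq_le_sq_mul_sq s _ _

lemma normSq_sum_le_card_mul {α : Type*} (s : Finset α) (f : α → ℂ) :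
    normSq (∑ i ∈ s, f i) ≤ #s * ∑ i ∈ s, normSq (f i) := by
  simpa [mul_comm] using normSq_sum_mul_le s f 1

lemma sum_graph_le_sum_prod {α β : Type*} [Fintype α] [Fintype β] (F : α × β → ℝ)
    (hF : 0 ≤ F) (φ : α → β) : ∑ a, F (a, φ a) ≤ ∑ x, F x := by
  rw [Fintype.sum_prod_type]
  exact sum_le_sum fun a _ => single_le_sum (fun b _ => hF (a, b)) (mem_univ _)

def normSqSum {α : Type*} [Fintype α] (v : α → ℂ) : ℝ := ∑ x, normSq (v x)

lemma normSqSum_nonneg {α : Type*} [Fintype α] (v : α → ℂ) : 0 ≤ normSqSum v :=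
  sum_nonneg fun x _ => normSq_nonneg (v x)

lemma normSqSum_mul {α β : Type*} [Fintype α] [Fintype β] (f : α → ℂ) (g : β → ℂ) :
    normSqSum (fun x : α × β => f x.1 * g x.2) = normSqSum f * normSqSum g := by
  simp [normSqSum, normSq_mul, Fintype.sum_prod_type, sum_mul_sum]

lemma normSqSum_comp_equiv {α β : Type*} [Fintype α] [Fintype β] (v : β → ℂ) (e : α ≃ β) :
    normSqSum (v ∘ e) = normSqSum v :=
  e.sum_comp fun x => normSq (v x)

lemma sum_sum_mul_star {α : Type*} [Fintype α] (v : α → ℂ) :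
    ∑ i, ∑ i', v i * star (v i') = (normSq (∑ i, v i) : ℂ) := by
  rw [← mul_conj, ← star_def, star_sum, sum_mul_sum]

section Contractions

variable {ι κ : Type*} [Fintype ι] [Fintype κ]

-- Partial overlaps of `u ∈ (A₁ ⊗ A₂) ⊗ B ⊗ C` with the unnormalised `Φ⁺ = ∑ᵢ |ii⟩`
-- on `A₁B`, on `A₂C`, and on both.
def contractA₁B (u : (ι × κ) × ι × κ → ℂ) : κ × κ → ℂ :=
  fun x => ∑ i, u ((i, x.1), i, x.2)

def contractA₂C (u : (ι × κ) × ι × κ → ℂ) : ι × ι → ℂ :=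
  fun x => ∑ j, u ((x.1, j), x.2, j)

def contractAll (u : (ι × κ) × ι × κ → ℂ) : ℂ :=
  ∑ i, ∑ j, u ((i, j), i, j)

-- Exchanges `A₁ ↔ A₂` and `B ↔ C`, hence `contractA₁B ↔ contractA₂C` (definitionally).
def swapParties (u : (ι × κ) × ι × κ → ℂ) : (κ × ι) × κ × ι → ℂ :=
  fun q => u ((q.1.2, q.1.1), q.2.2, q.2.1)

variable (u : (ι × κ) × ι × κ → ℂ)

lemma contractAll_swapParties : contractAll (swapParties u) = contractAll u :=
  sum_comm

lemma normSqSum_swapParties : normSqSum (swapParties u) = normSqSum u :=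
  normSqSum_comp_equiv u ((Equiv.prodComm κ ι).prodCongr (Equiv.prodComm κ ι))

lemma normSq_contractAll_le_contractA₁B :
    normSq (contractAll u) ≤ Fintype.card κ * normSqSum (contractA₁B u) := by
  have hsum : contractAll u = ∑ j, contractA₁B u (j, j) := sum_comm
  calc normSq (contractAll u)
      ≤ Fintype.card κ * ∑ j, normSq (contractA₁B u (j, j)) := by
        rw [hsum]; exact normSq_sum_le_card_mul _ _
    _ ≤ Fintype.card κ * normSqSum (contractA₁B u) := by
        gcongr
        exact sum_graph_le_sum_prod (fun x => normSq (contractA₁B u x))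
          (fun x => normSq_nonneg _) id

lemma normSq_contractAll_le_contractA₂C :
    normSq (contractAll u) ≤ Fintype.card ι * normSqSum (contractA₂C u) := by
  have := normSq_contractAll_le_contractA₁B (swapParties u)
  rwa [contractAll_swapParties] at this

lemma normSq_contractAll_le_of_prod_A {f g : ι × κ → ℂ}
    (hu : ∀ q, u q = f q.1 * g q.2) : normSq (contractAll u) ≤ normSqSum u := by
  have hsum : contractAll u = ∑ x, f x * g x := by
    simp only [contractAll, hu, Fintype.sum_prod_type]
  rw [hsum, show u = fun q => f q.1 * g q.2 from funext hu, normSqSum_mul]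
  exact normSq_sum_mul_le _ f g

lemma normSqSum_contractA₂C_of_prod_B {f : ι → ℂ} {g : (ι × κ) × κ → ℂ}
    (hu : ∀ q, u q = f q.2.1 * g (q.1, q.2.2)) :
    normSqSum (contractA₂C u) = normSqSum (fun i => ∑ j, g ((i, j), j)) * normSqSum f := by
  rw [← normSqSum_mul]
  congr 1
  funext x
  simp only [contractA₂C, hu, ← mul_sum, mul_comm]

lemma normSq_contractAll_le_of_prod_B {f : ι → ℂ} {g : (ι × κ) × κ → ℂ}
    (hu : ∀ q, u q = f q.2.1 * g (q.1, q.2.2)) :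
    normSq (contractAll u) ≤ normSqSum (contractA₂C u) := by
  have hsum : contractAll u = ∑ i, (∑ j, g ((i, j), j)) * f i := by
    simp only [contractAll, hu, ← mul_sum, mul_comm]
  rw [hsum, normSqSum_contractA₂C_of_prod_B u hu]
  exact normSq_sum_mul_le _ _ _

lemma normSqSum_contractA₂C_le_of_prod_B {f : ι → ℂ} {g : (ι × κ) × κ → ℂ}
    (hu : ∀ q, u q = f q.2.1 * g (q.1, q.2.2)) :
    normSqSum (contractA₂C u) ≤ Fintype.card κ * normSqSum u := by
  let e : (ι × κ) × ι × κ ≃ ((ι × κ) × κ) × ι :=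
    { toFun := fun q => ((q.1, q.2.2), q.2.1)
      invFun := fun x => (x.1.1, x.2, x.1.2)
      left_inv := fun _ => rfl
      right_inv := fun _ => rfl }
  have hN : normSqSum u = normSqSum g * normSqSum f := by
    rw [← normSqSum_mul, ← normSqSum_comp_equiv _ e]
    exact congrArg normSqSum (funext fun q => (hu q).trans (mul_comm _ _))
  have hg : normSqSum (fun i => ∑ j, g ((i, j), j)) ≤ Fintype.card κ * normSqSum g :=
    calc normSqSum (fun i => ∑ j, g ((i, j), j))
        ≤ ∑ i, Fintype.card κ * ∑ j, normSq (g ((i, j), j)) :=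
          sum_le_sum fun i _ => normSq_sum_le_card_mul _ _
      _ = Fintype.card κ * ∑ y : ι × κ, normSq (g (y, y.2)) := by
          rw [← mul_sum, Fintype.sum_prod_type]
      _ ≤ Fintype.card κ * normSqSum g := by
          gcongr
          exact sum_graph_le_sum_prod (fun x => normSq (g x)) (fun x => normSq_nonneg _) _
  rw [normSqSum_contractA₂C_of_prod_B u hu, hN, ← mul_assoc]
  exact mul_le_mul_of_nonneg_right hg (normSqSum_nonneg f)

lemma normSq_contractAll_le_of_prod_C {f : κ → ℂ} {g : (ι × κ) × ι → ℂ}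
    (hu : ∀ q, u q = f q.2.2 * g (q.1, q.2.1)) :
    normSq (contractAll u) ≤ normSqSum (contractA₁B u) := by
  have := normSq_contractAll_le_of_prod_B (swapParties u)
    (g := fun y => g ((y.1.2, y.1.1), y.2)) fun q => hu _
  rwa [contractAll_swapParties] at this

lemma normSqSum_contractA₁B_le_of_prod_C {f : κ → ℂ} {g : (ι × κ) × ι → ℂ}
    (hu : ∀ q, u q = f q.2.2 * g (q.1, q.2.1)) :
    normSqSum (contractA₁B u) ≤ Fintype.card ι * normSqSum u := by
  have := normSqSum_contractA₂C_le_of_prod_B (swapParties u)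
    (g := fun y => g ((y.1.2, y.1.1), y.2)) fun q => hu _
  rwa [normSqSum_swapParties] at this

lemma two_mul_normSq_contractAll_le_of_prodAcross3 (hι : Fintype.card ι ≤ 2)
    (hκ : Fintype.card κ ≤ 2) (hu : ProdAcross3 u) :
    2 * normSq (contractAll u) ≤
      normSqSum u + normSqSum (contractA₁B u) + normSqSum (contractA₂C u) := by
  have scale {n : ℕ} {x : ℝ} (hn : n ≤ 2) (hx : 0 ≤ x) : n * x ≤ 2 * x :=
    mul_le_mul_of_nonneg_right (by exact_mod_cast hn) hx
  have hB := (normSq_contractAll_le_contractA₁B u).trans (scale hκ (normSqSum_nonneg _))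
  have hC := (normSq_contractAll_le_contractA₂C u).trans (scale hι (normSqSum_nonneg _))
  rcases hu with ⟨f, g, hu⟩ | ⟨f, g, hu⟩ | ⟨f, g, hu⟩
  · linarith [normSq_contractAll_le_of_prod_A u hu]
  · linarith [normSq_contractAll_le_of_prod_B u hu,
      (normSqSum_contractA₂C_le_of_prod_B u hu).trans (scale hκ (normSqSum_nonneg _))]
  · linarith [normSq_contractAll_le_of_prod_C u hu,
      (normSqSum_contractA₁B_le_of_prod_C u hu).trans (scale hι (normSqSum_nonneg _))]

end Contractions

section Witness

variable {ι κ : Type*} [Fintype ι] [Fintype κ]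

-- `σ ↦ Tr(Wσ)` for `W = 𝟙 + |Φ⁺⟩⟨Φ⁺|_{A₁B} + |Φ⁺⟩⟨Φ⁺|_{A₂C} - 2|Φ⁺⟩⟨Φ⁺|_{A₁B} ⊗ |Φ⁺⟩⟨Φ⁺|_{A₂C}`,
-- which on qubits is the witness `W` above.
def lambdaWitness : Matrix ((ι × κ) × ι × κ) ((ι × κ) × ι × κ) ℂ →ₗ[ℂ] ℂ where
  toFun σ := σ.trace
    + ∑ x : κ × κ, ∑ i, ∑ i', σ ((i, x.1), i, x.2) ((i', x.1), i', x.2)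
    + ∑ x : ι × ι, ∑ j, ∑ j', σ ((x.1, j), x.2, j) ((x.1, j'), x.2, j')
    - 2 * ∑ i, ∑ j, ∑ i', ∑ j', σ ((i, j), i, j) ((i', j'), i', j')
  map_add' σ τ := by
    simp only [trace_add, Matrix.add_apply, sum_add_distrib]
    ring
  map_smul' c σ := by
    simp only [trace_smul, Matrix.smul_apply, smul_eq_mul, ← mul_sum, RingHom.id_apply]
    ring

lemma lambdaWitness_vecProj (u : (ι × κ) × ι × κ → ℂ) :
    lambdaWitness (vecProj u) = ((normSqSum u + normSqSum (contractA₁B u)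
      + normSqSum (contractA₂C u) - 2 * normSq (contractAll u) : ℝ) : ℂ) := by
  have hAll := sum_sum_mul_star fun x : ι × κ => u ((x.1, x.2), x.1, x.2)
  simp only [Fintype.sum_prod_type] at hAll
  simp only [lambdaWitness, LinearMap.coe_mk, AddHom.coe_mk, vecProj, trace, Matrix.diag, of_apply,
    sum_sum_mul_star, hAll, normSqSum, contractA₁B, contractA₂C, contractAll]
  push_cast
  simp only [← mul_conj, star_def]

lemma re_lambdaWitness_nonneg_of_bisep3 (hι : Fintype.card ι ≤ 2) (hκ : Fintype.card κ ≤ 2)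
    {σ : Matrix ((ι × κ) × ι × κ) ((ι × κ) × ι × κ) ℂ} (hσ : Bisep3 σ) :
    0 ≤ (lambdaWitness σ).re := by
  obtain ⟨m, w, u, hw, -, hu, rfl⟩ := hσ
  simp only [map_sum, map_smul, lambdaWitness_vecProj, smul_eq_mul, re_sum, ← ofReal_mul,
    ofReal_re]
  exact sum_nonneg fun k _ => mul_nonneg (hw k)
    (sub_nonneg.2 (two_mul_normSq_contractAll_le_of_prodAcross3 _ hι hκ (hu k).2))

def networkState (ρ₁ : Matrix (ι × ι) (ι × ι) ℂ) (ρ₂ : Matrix (κ × κ) (κ × κ) ℂ) :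
    Matrix ((ι × κ) × ι × κ) ((ι × κ) × ι × κ) ℂ :=
  of fun x y => ρ₁ (x.1.1, x.2.1) (y.1.1, y.2.1) * ρ₂ (x.1.2, x.2.2) (y.1.2, y.2.2)

def maxEntOverlap (ρ : Matrix (ι × ι) (ι × ι) ℂ) : ℂ :=
  ∑ i, ∑ i', ρ (i, i) (i', i')

lemma lambdaNet_eq_networkState (d : ℕ) (p₁ p₂ : ℝ) :
    lambdaNet d p₁ p₂ = networkState (isoState d p₁) (isoState d p₂) := rfl

lemma lambdaWitness_networkState (ρ₁ : Matrix (ι × ι) (ι × ι) ℂ)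
    (ρ₂ : Matrix (κ × κ) (κ × κ) ℂ) :
    lambdaWitness (networkState ρ₁ ρ₂) = ρ₁.trace * ρ₂.trace + maxEntOverlap ρ₁ * ρ₂.trace
      + ρ₁.trace * maxEntOverlap ρ₂ - 2 * (maxEntOverlap ρ₁ * maxEntOverlap ρ₂) := by
  have htrace : (networkState ρ₁ ρ₂).trace = ρ₁.trace * ρ₂.trace := by
    rw [trace, trace, trace, sum_mul_sum, ← Fintype.sum_prod_type',
      ← (Equiv.prodProdProdComm ι κ ι κ).sum_comp]
    rfl
  simp only [lambdaWitness, LinearMap.coe_mk, AddHom.coe_mk]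
  rw [htrace]
  simp only [networkState, maxEntOverlap, of_apply, Prod.mk.eta, ← sum_mul, ← mul_sum, trace,
    Matrix.diag]

end Witness

lemma vecProj_maxEntVec_apply {d : ℕ} (x y : Fin d × Fin d) :
    vecProj (maxEntVec d) x y = if x.1 = x.2 ∧ y.1 = y.2 then (d : ℂ)⁻¹ else 0 := by
  have hsqrt : ((√(d : ℝ) : ℂ))⁻¹ * (√(d : ℝ) : ℂ)⁻¹ = (d : ℂ)⁻¹ := by
    rw [← mul_inv, ← ofReal_mul, Real.mul_self_sqrt (Nat.cast_nonneg d), ofReal_natCast]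
  by_cases hx : x.1 = x.2 <;> by_cases hy : y.1 = y.2 <;>
    simp [vecProj, maxEntVec, hx, hy, hsqrt]

lemma isoState_apply (d : ℕ) (p : ℝ) (x y : Fin d × Fin d) :
    isoState d p x y = (if x.1 = x.2 ∧ y.1 = y.2 then (p / d : ℂ) else 0)
      + if x = y then ((1 - p) / d ^ 2 : ℂ) else 0 := by
  simp [isoState, vecProj_maxEntVec_apply, one_apply, div_eq_mul_inv]

lemma trace_isoState {d : ℕ} (hd : d ≠ 0) (p : ℝ) : (isoState d p).trace = 1 := by
  have hd' : (d : ℂ) ≠ 0 := Nat.cast_ne_zero.2 hd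
  simp only [trace, diag_apply, isoState_apply, and_self, ↓reduceIte, sum_add_distrib,
    Fintype.sum_prod_type, sum_ite_eq, mem_univ, sum_const, card_univ, Fintype.card_fin,
    nsmul_eq_mul, Fintype.card_prod, Nat.cast_mul]
  field_simp
  ring

lemma maxEntOverlap_isoState {d : ℕ} (hd : d ≠ 0) (p : ℝ) :
    maxEntOverlap (isoState d p) = p * d + (1 - p) / d := by
  have hd' : (d : ℂ) ≠ 0 := Nat.cast_ne_zero.2 hd
  simp only [maxEntOverlap, isoState_apply, and_self, ↓reduceIte, Prod.mk.injEq, sum_add_distrib,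
    sum_const, card_univ, Fintype.card_fin, nsmul_eq_mul, sum_ite_eq, mem_univ]
  field_simp

theorem lambda_network_GME_general (p₁ p₂ : ℝ)
    (hp : 1 / 3 < p₁ * p₂) :
    ¬ Bisep3 (lambdaNet 2 p₁ p₂) := by
  intro h
  have hW := re_lambdaWitness_nonneg_of_bisep3 (by simp) (by simp) h
  simp only [lambdaNet_eq_networkState, lambdaWitness_networkState, trace_isoState two_ne_zero,
    maxEntOverlap_isoState two_ne_zero] at hW
  norm_num at hW
  linarith

/-- **GME of the qubit Lambda network.** If `p₁ p₂ > 1/3`, the Lambda network of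
2-dimensional isotropic states, viewed as a tripartite state of `A = (A₁, A₂)`, `B`,
`C`, is genuinely multipartite entangled. -/
theorem lambda_network_GME (p₁ p₂ : ℝ)
    (h₁ : p₁ ∈ Set.Icc (0 : ℝ) 1) (h₂ : p₂ ∈ Set.Icc (0 : ℝ) 1)
    (hp : 1 / 3 < p₁ * p₂) :
    ¬ Bisep3 (lambdaNet 2 p₁ p₂) :=
  lambda_network_GME_general p₁ p₂ hp
end
end

section
/- GME of the qubit triangle network: let p ∈ [0,1] with p > (2√5 − 3)/3. Consider the six-qubit state ρ_p ⊗ ρ_p ⊗ ρ_p, where the three 2-dimensional isotropic states are shared between qubit pairs A₁B₁, A₂C₁, and B₂C₂ respectively. Regarded as a tripartite state of parties A = (A₁,A₂), B = (B₁,B₂), C = (C₁,C₂), this state is genuinely multipartite entangled, i.e. not biseparable with respect to the party bipartitions A|BC, B|AC, C|AB. -/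
open Matrix Finset
open scoped ComplexOrder

attribute [local instance] Classical.propDecidable

noncomputable section

/-- The triangle network state: isotropic states with visibility `p` on the subsystem
pairs `A₁B₁`, `A₂C₁` and `B₂C₂`, with indices grouped by party as
`(A₁ × A₂) × (B₁ × B₂) × (C₁ × C₂)`. -/
def triangleNet (d : ℕ) (p : ℝ) :
    Matrix ((Fin d × Fin d) × (Fin d × Fin d) × (Fin d × Fin d))
           ((Fin d × Fin d) × (Fin d × Fin d) × (Fin d × Fin d)) ℂ :=
  Matrix.of fun x y =>
    isoState d p (x.1.1, x.2.1.1) (y.1.1, y.2.1.1) *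
    isoState d p (x.1.2, x.2.2.1) (y.1.2, y.2.2.1) *
    isoState d p (x.2.1.2, x.2.2.2) (y.2.1.2, y.2.2.2)


/-!
The witness `W = n² φ⁺ ⊗ φ⁺ ⊗ φ⁺ + (1 - φ⁺) ⊗ (1 - φ⁺) ⊗ (1 - φ⁺)`, written on the three links,
satisfies `⟨v, W v⟩ ≤ ‖v‖²` for every vector `v` that is a product across a party bipartition.
Up to a symmetry of `W` the cut separates `C`, whose qudits sit in the second slots of the links
`A₂C₁` and `B₂C₂`. Contracting the link `A₁B₁` with `φ⁺` turns `v` into a vector `c` that is a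
product across that cut, so Cauchy–Schwarz bounds the first term by `‖c‖²`; the second term is at
most `⟨v, ((1 - φ⁺) ⊗ 1) v⟩ = ‖v‖² - ‖c‖²`. Hence `tr(W ρ) ≤ 1` for biseparable `ρ`, while on
the triangle network `tr(W ρ) = n² t³ + (1 - t)³` with `t = p + (1 - p)/n²`, which for `n = 2`
exceeds `1` exactly when `p > (2√5 - 3)/3`.
-/

open scoped Kronecker MatrixOrder

namespace TriangleNetwork

section General

variable {α β κ : Type*} [Fintype α] [Fintype β] [Fintype κ]

lemma vecProj_eq_vecMulVec (v : α → ℂ) : vecProj v = vecMulVec v (star v) := rfl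

lemma trace_mul_vecProj (M : Matrix α α ℂ) (v : α → ℂ) :
    trace (M * vecProj v) = star v ⬝ᵥ (M *ᵥ v) := by
  rw [vecProj_eq_vecMulVec, mul_vecMulVec, trace_vecMulVec, dotProduct_comm]

lemma re_trace_mul_sum_vecProj_le (M : Matrix α α ℂ) {c : ℝ} (w : κ → ℝ) (hw0 : ∀ k, 0 ≤ w k)
    (hw1 : ∑ k, w k = 1) (u : κ → α → ℂ) (hu : ∀ k, (star (u k) ⬝ᵥ (M *ᵥ u k)).re ≤ c) :
    (trace (M * ∑ k, (w k : ℂ) • vecProj (u k))).re ≤ c := by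
  simp only [Finset.mul_sum, mul_smul_comm, trace_sum, trace_smul, trace_mul_vecProj,
    smul_eq_mul, Complex.re_sum, Complex.re_ofReal_mul]
  calc ∑ k, w k * (star (u k) ⬝ᵥ (M *ᵥ u k)).re ≤ ∑ k, w k * c :=
        Finset.sum_le_sum fun k _ => mul_le_mul_of_nonneg_left (hu k) (hw0 k)
    _ = c := by rw [← Finset.sum_mul, hw1, one_mul]

lemma trace_submatrix_equiv (M : Matrix β β ℂ) (e : α ≃ β) : trace (M.submatrix e e) = trace M :=
  e.sum_comp fun i => M i i

lemma star_dotProduct_submatrix_mulVec (M : Matrix β β ℂ) (e : α ≃ β) (u : α → ℂ) :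
    star u ⬝ᵥ (M.submatrix e e *ᵥ u) = star (u ∘ e.symm) ⬝ᵥ (M *ᵥ (u ∘ e.symm)) := by
  rw [submatrix_mulVec_equiv, ← comp_equiv_symm_dotProduct]
  rfl

lemma re_star_dotProduct_self (v : α → ℂ) : (star v ⬝ᵥ v).re = ∑ x, Complex.normSq (v x) := by
  simp [dotProduct, Complex.re_sum, Complex.normSq_apply]

lemma normSq_sum_mul_le (f h : α → ℂ) :
    Complex.normSq (∑ x, f x * h x) ≤ (∑ x, Complex.normSq (f x)) * ∑ x, Complex.normSq (h x) := by
  have htri : ‖∑ x, f x * h x‖ ≤ ∑ x, ‖f x‖ * ‖h x‖ :=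
    (norm_sum_le _ _).trans_eq (by simp only [norm_mul])
  simp only [← Complex.sq_norm]
  exact (pow_le_pow_left₀ (norm_nonneg _) htri 2).trans (Finset.sum_mul_sq_le_sq_mul_sq _ _ _)

lemma star_dotProduct_vecProj_mulVec (a v : α → ℂ) :
    star v ⬝ᵥ (vecProj a *ᵥ v) = Complex.normSq (star a ⬝ᵥ v) := by
  rw [vecProj_eq_vecMulVec, vecMulVec_mulVec, Complex.normSq_eq_conj_mul_self, dotProduct_smul,
    MulOpposite.smul_eq_mul_unop, MulOpposite.unop_op, ← Complex.star_def, star_dotProduct]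

lemma trace_vecProj {v : α → ℂ} (hv : UnitVec v) : trace (vecProj v) = 1 := by
  rw [vecProj_eq_vecMulVec, trace_vecMulVec, dotProduct_comm]
  exact hv

lemma vecProj_prod (a : α → ℂ) (b : β → ℂ) :
    vecProj (fun q : α × β => a q.1 * b q.2) = vecProj a ⊗ₖ vecProj b := by
  ext ⟨i, j⟩ ⟨k, l⟩
  simp only [vecProj, of_apply, kronecker_apply, star_mul']
  ring

lemma isStarProjection_vecProj {v : α → ℂ} (hv : UnitVec v) : IsStarProjection (vecProj v) where
  isIdempotentElem := by
    rw [IsIdempotentElem, vecProj_eq_vecMulVec, vecMulVec_mul_vecMulVec,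
      show star v ⬝ᵥ v = 1 from hv, one_smul]
  isSelfAdjoint := by
    rw [IsSelfAdjoint, star_eq_conjTranspose, vecProj_eq_vecMulVec, conjTranspose_vecMulVec,
      star_star]

lemma isStarProjection_kronecker {A : Matrix α α ℂ} {B : Matrix β β ℂ} (hA : IsStarProjection A)
    (hB : IsStarProjection B) : IsStarProjection (A ⊗ₖ B) where
  isIdempotentElem := by
    rw [IsIdempotentElem, ← mul_kronecker_mul, hA.isIdempotentElem.eq, hB.isIdempotentElem.eq]
  isSelfAdjoint := by
    rw [IsSelfAdjoint, star_eq_conjTranspose, conjTranspose_kronecker, ← star_eq_conjTranspose,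
      ← star_eq_conjTranspose, hA.isSelfAdjoint.star_eq, hB.isSelfAdjoint.star_eq]

lemma re_dotProduct_kronecker_mulVec_le [DecidableEq β] {A : Matrix α α ℂ} {B : Matrix β β ℂ}
    (hA : IsStarProjection A) (hB : IsStarProjection B) (v : α × β → ℂ) :
    (star v ⬝ᵥ ((A ⊗ₖ B) *ᵥ v)).re ≤ (star v ⬝ᵥ ((A ⊗ₖ 1) *ᵥ v)).re := by
  have hpsd : (A ⊗ₖ (1 - B)).PosSemidef :=
    (nonneg_iff_posSemidef.mp hA.nonneg).kronecker (nonneg_iff_posSemidef.mp hB.one_sub.nonneg)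
  have hsub : A ⊗ₖ (1 - B) = A ⊗ₖ 1 - A ⊗ₖ B := by ext; simp [mul_sub]
  have h := (Complex.le_def.mp (hpsd.dotProduct_mulVec_nonneg v)).1
  rwa [hsub, sub_mulVec, dotProduct_sub, Complex.sub_re, Complex.zero_re, sub_nonneg] at h

def partialInner (a : α → ℂ) (v : α × β → ℂ) (x : β) : ℂ := ∑ k, star (a k) * v (k, x)

lemma star_prod_dotProduct (a : α → ℂ) (b : β → ℂ) (v : α × β → ℂ) :
    star (fun q : α × β => a q.1 * b q.2) ⬝ᵥ v = star b ⬝ᵥ partialInner a v := by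
  simp only [dotProduct, Fintype.sum_prod_type, partialInner, Pi.star_apply, star_mul',
    Finset.mul_sum]
  rw [Finset.sum_comm]
  simp [mul_comm, mul_left_comm]

lemma vecProj_kronecker_one_mulVec [DecidableEq β] (a : α → ℂ) (v : α × β → ℂ) :
    (vecProj a ⊗ₖ (1 : Matrix β β ℂ)) *ᵥ v = fun q => a q.1 * partialInner a v q.2 := by
  ext ⟨k, x⟩
  simp [mulVec, dotProduct, vecProj, one_apply, partialInner, Fintype.sum_prod_type,
    Finset.mul_sum, mul_assoc]

lemma star_dotProduct_vecProj_kronecker_one_mulVec [DecidableEq β] (a : α → ℂ)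
    (v : α × β → ℂ) :
    star v ⬝ᵥ ((vecProj a ⊗ₖ (1 : Matrix β β ℂ)) *ᵥ v)
      = star (partialInner a v) ⬝ᵥ partialInner a v := by
  rw [vecProj_kronecker_one_mulVec, star_dotProduct, star_prod_dotProduct,
    ← star_dotProduct_star, star_star]

lemma re_dotProduct_one_sub_vecProj_kronecker_mulVec_le [DecidableEq α] [DecidableEq β]
    {a : α → ℂ} (ha : UnitVec a) {B : Matrix β β ℂ} (hB : IsStarProjection B) (v : α × β → ℂ) :
    (star v ⬝ᵥ (((1 - vecProj a) ⊗ₖ B) *ᵥ v)).re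
      ≤ (star v ⬝ᵥ v).re - (star (partialInner a v) ⬝ᵥ partialInner a v).re := by
  refine (re_dotProduct_kronecker_mulVec_le (isStarProjection_vecProj ha).one_sub hB v).trans_eq ?_
  have h : (1 - vecProj a) ⊗ₖ (1 : Matrix β β ℂ) = 1 - vecProj a ⊗ₖ 1 := by
    ext ⟨i₁, i₂⟩ ⟨j₁, j₂⟩
    by_cases h : i₂ = j₂ <;> simp [one_apply, h]
  rw [h, sub_mulVec, one_mulVec, dotProduct_sub, star_dotProduct_vecProj_kronecker_one_mulVec,
    Complex.sub_re]

end General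

variable {n : ℕ}

abbrev Pair (n : ℕ) : Type := Fin n × Fin n

abbrev Triple (n : ℕ) : Type := Pair n × Pair n × Pair n

def maxEntProj (n : ℕ) : Matrix (Pair n) (Pair n) ℂ := vecProj (maxEntVec n)

lemma unitVec_maxEntVec [NeZero n] : UnitVec (maxEntVec n) := by
  have h : ∀ q : Pair n, star (maxEntVec n q) * maxEntVec n q
      = if q.1 = q.2 then ((n : ℝ)⁻¹ : ℂ) else 0 := by
    intro q
    unfold maxEntVec
    split_ifs
    · rw [← Complex.ofReal_inv, Complex.star_def, Complex.conj_ofReal, ← Complex.ofReal_mul,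
        ← mul_inv, Real.mul_self_sqrt (Nat.cast_nonneg n)]
    · simp
  rw [UnitVec, Finset.sum_congr rfl fun q _ => h q, Fintype.sum_prod_type]
  simp

lemma isStarProjection_maxEntProj [NeZero n] : IsStarProjection (maxEntProj n) :=
  isStarProjection_vecProj unitVec_maxEntVec

lemma maxEntProj_swap_apply (k l : Pair n) : maxEntProj n k.swap l.swap = maxEntProj n k l := by
  simp [maxEntProj, vecProj, maxEntVec, eq_comm]

lemma one_sub_maxEntProj_swap_apply (k l : Pair n) :
    (1 - maxEntProj n) k.swap l.swap = (1 - maxEntProj n) k l := by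
  simp only [Matrix.sub_apply, maxEntProj_swap_apply, one_apply, Prod.swap_inj]

lemma isoState_eq (p : ℝ) :
    isoState n p = (p : ℂ) • maxEntProj n + (((1 - p) / n ^ 2 : ℝ) : ℂ) • 1 := by
  simp [isoState, maxEntProj]

lemma trace_isoState [NeZero n] (p : ℝ) : trace (isoState n p) = 1 := by
  have hn : (n : ℂ) ≠ 0 := NeZero.ne _
  rw [isoState_eq, trace_add, trace_smul, trace_smul, maxEntProj,
    trace_vecProj unitVec_maxEntVec, trace_one]
  simp [Fintype.card_prod]
  field_simp
  ring

lemma trace_maxEntProj_mul_isoState [NeZero n] (p : ℝ) :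
    trace (maxEntProj n * isoState n p) = ((p + (1 - p) / n ^ 2 : ℝ) : ℂ) := by
  rw [isoState_eq, mul_add, mul_smul_comm, mul_smul_comm, mul_one,
    isStarProjection_maxEntProj.isIdempotentElem.eq, trace_add, trace_smul, trace_smul,
    maxEntProj, trace_vecProj unitVec_maxEntVec]
  push_cast
  ring

/-- Indexed by the links `A₁B₁`, `A₂C₁`, `B₂C₂`, in this order. -/
def witness (n : ℕ) : Matrix (Triple n) (Triple n) ℂ :=
  ((n : ℂ) ^ 2) • (maxEntProj n ⊗ₖ (maxEntProj n ⊗ₖ maxEntProj n))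
    + (1 - maxEntProj n) ⊗ₖ ((1 - maxEntProj n) ⊗ₖ (1 - maxEntProj n))

def witnessValue (n : ℕ) (p : ℝ) : ℝ :=
  (n : ℝ) ^ 2 * (p + (1 - p) / n ^ 2) ^ 3 + (1 - (p + (1 - p) / n ^ 2)) ^ 3

lemma trace_witness_mul_kronecker_isoState [NeZero n] (p : ℝ) :
    trace (witness n * (isoState n p ⊗ₖ (isoState n p ⊗ₖ isoState n p)))
      = (witnessValue n p : ℂ) := by
  have hE : trace ((1 - maxEntProj n) * isoState n p)
      = ((1 - (p + (1 - p) / n ^ 2) : ℝ) : ℂ) := by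
    rw [sub_mul, one_mul, trace_sub, trace_isoState, trace_maxEntProj_mul_isoState]
    push_cast
    ring
  simp only [witness, witnessValue, add_mul, smul_mul_assoc, ← mul_kronecker_mul, trace_add,
    trace_smul, trace_kronecker, trace_maxEntProj_mul_isoState, hE]
  push_cast
  ring

lemma star_maxEntVec_prod_dotProduct (c : Pair n × Pair n → ℂ) :
    star (fun x : Pair n × Pair n => maxEntVec n x.1 * maxEntVec n x.2) ⬝ᵥ c
      = (n : ℂ)⁻¹ * ∑ j, ∑ k, c ((j, j), (k, k)) := by
  have hs : ((Real.sqrt n)⁻¹ : ℂ) * ((Real.sqrt n)⁻¹ : ℂ) = (n : ℂ)⁻¹ := by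
    rw [← mul_inv, ← Complex.ofReal_mul, Real.mul_self_sqrt (Nat.cast_nonneg n)]
    simp
  simp only [dotProduct, Fintype.sum_prod_type, Pi.star_apply, maxEntVec, star_mul',
    apply_ite star, star_zero]
  simp [Finset.mul_sum, hs]

lemma sum_normSq_mul_swap (f h : Pair n → ℂ) :
    ∑ x : Pair n × Pair n, Complex.normSq (f (x.1.2, x.2.2) * h (x.1.1, x.2.1))
      = (∑ y, Complex.normSq (f y)) * ∑ y, Complex.normSq (h y) := by
  rw [Fintype.sum_mul_sum, ← (Equiv.prodProdProdComm _ _ _ _).sum_comp, Fintype.sum_prod_type,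
    Finset.sum_comm]
  simp

lemma normSq_star_maxEntVec_prod_dotProduct_le [NeZero n] (c : Pair n × Pair n → ℂ)
    (f h : Pair n → ℂ) (hc : ∀ x, c x = f (x.1.2, x.2.2) * h (x.1.1, x.2.1)) :
    (n : ℝ) ^ 2 * Complex.normSq
        (star (fun x : Pair n × Pair n => maxEntVec n x.1 * maxEntVec n x.2) ⬝ᵥ c)
      ≤ (star c ⬝ᵥ c).re := by
  have hn : (n : ℝ) ≠ 0 := NeZero.ne _
  have hdiag : ∑ j, ∑ k, c ((j, j), (k, k)) = ∑ y, f y * h y := by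
    simp only [hc, Fintype.sum_prod_type]
  rw [star_maxEntVec_prod_dotProduct, hdiag, Complex.normSq_mul, re_star_dotProduct_self,
    funext hc, sum_normSq_mul_swap]
  simp only [map_inv₀, Complex.normSq_natCast]
  rw [← mul_assoc, ← sq, mul_inv_cancel₀ (pow_ne_zero 2 hn), one_mul]
  exact normSq_sum_mul_le f h

lemma re_witness_le_of_product [NeZero n] (v : Triple n → ℂ) (f : Pair n → ℂ)
    (g : Pair n × Fin n × Fin n → ℂ)
    (hv : ∀ l, v l = f (l.2.1.2, l.2.2.2) * g (l.1, l.2.1.1, l.2.2.1)) :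
    (star v ⬝ᵥ (witness n *ᵥ v)).re ≤ (star v ⬝ᵥ v).re := by
  set c := partialInner (maxEntVec n) v
  obtain ⟨h, hc⟩ : ∃ h : Pair n → ℂ, ∀ x, c x = f (x.1.2, x.2.2) * h (x.1.1, x.2.1) := by
    refine ⟨fun y => ∑ k, star (maxEntVec n k) * g (k, y.1, y.2), fun x => ?_⟩
    simp only [c, partialInner, hv, Finset.mul_sum]
    exact Finset.sum_congr rfl fun _ _ => by ring
  have hwit : (star v ⬝ᵥ (witness n *ᵥ v)).re = (n : ℝ) ^ 2 * Complex.normSq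
        (star (fun x : Pair n × Pair n => maxEntVec n x.1 * maxEntVec n x.2) ⬝ᵥ c)
      + (star v ⬝ᵥ (((1 - maxEntProj n) ⊗ₖ ((1 - maxEntProj n) ⊗ₖ (1 - maxEntProj n)))
        *ᵥ v)).re := by
    rw [witness, add_mulVec, smul_mulVec, dotProduct_add, dotProduct_smul, maxEntProj,
      ← vecProj_prod, ← vecProj_prod, star_dotProduct_vecProj_mulVec, star_prod_dotProduct
      (maxEntVec n) (fun x : Pair n × Pair n => maxEntVec n x.1 * maxEntVec n x.2) v, smul_eq_mul,
      Complex.add_re, ← Complex.ofReal_natCast, ← Complex.ofReal_pow, ← Complex.ofReal_mul,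
      Complex.ofReal_re]
  have hproj := re_dotProduct_one_sub_vecProj_kronecker_mulVec_le unitVec_maxEntVec
    (isStarProjection_kronecker isStarProjection_maxEntProj.one_sub
      isStarProjection_maxEntProj.one_sub) v
  rw [← maxEntProj] at hproj
  have hD := normSq_star_maxEntVec_prod_dotProduct_le c f h hc
  linarith

lemma re_witness_submatrix_le_of_product [NeZero n] (e : Triple n ≃ Triple n)
    (u : Triple n → ℂ) (f : Pair n → ℂ) (g : Pair n × Fin n × Fin n → ℂ)
    (hu : ∀ l, u (e.symm l) = f (l.2.1.2, l.2.2.2) * g (l.1, l.2.1.1, l.2.2.1)) :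
    (star u ⬝ᵥ ((witness n).submatrix e e *ᵥ u)).re ≤ (star u ⬝ᵥ u).re := by
  rw [star_dotProduct_submatrix_mulVec, ← comp_equiv_dotProduct_comp_equiv (star u) u e.symm]
  exact re_witness_le_of_product _ f g hu

lemma witness_submatrix_rotate :
    (witness n).submatrix (fun l => (l.2.2, l.1.swap, l.2.1.swap))
      (fun l => (l.2.2, l.1.swap, l.2.1.swap)) = witness n := by
  ext ⟨l₁, l₂, l₃⟩ ⟨m₁, m₂, m₃⟩
  simp only [witness, submatrix_apply, Matrix.add_apply, Matrix.smul_apply, kronecker_apply,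
    maxEntProj_swap_apply, one_sub_maxEntProj_swap_apply]
  ring

lemma witness_submatrix_swap :
    (witness n).submatrix (fun l => (l.2.1, l.1, l.2.2.swap))
      (fun l => (l.2.1, l.1, l.2.2.swap)) = witness n := by
  ext ⟨l₁, l₂, l₃⟩ ⟨m₁, m₂, m₃⟩
  simp only [witness, submatrix_apply, Matrix.add_apply, Matrix.smul_apply, kronecker_apply,
    maxEntProj_swap_apply, one_sub_maxEntProj_swap_apply]
  ring

/-- `((a₁, a₂), (b₁, b₂), (c₁, c₂)) ↦ ((a₁, b₁), (a₂, c₁), (b₂, c₂))`: from the party ordering of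
`triangleNet` to the link ordering of `witness`. -/
def linkEquiv (n : ℕ) : Triple n ≃ Triple n where
  toFun x := ((x.1.1, x.2.1.1), (x.1.2, x.2.2.1), (x.2.1.2, x.2.2.2))
  invFun l := ((l.1.1, l.2.1.1), (l.1.2, l.2.2.1), (l.2.1.2, l.2.2.2))
  left_inv _ := rfl
  right_inv _ := rfl

/- `linkEquivA` and `linkEquivB` are `linkEquiv` followed by a symmetry of the witness; they put
the qudits of `A`, respectively `B`, where `linkEquiv` puts those of `C`. -/

def linkEquivA (n : ℕ) : Triple n ≃ Triple n where
  toFun x := ((x.2.1.2, x.2.2.2), (x.2.1.1, x.1.1), (x.2.2.1, x.1.2))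
  invFun l := ((l.2.1.2, l.2.2.2), (l.2.1.1, l.1.1), (l.2.2.1, l.1.2))
  left_inv _ := rfl
  right_inv _ := rfl

def linkEquivB (n : ℕ) : Triple n ≃ Triple n where
  toFun x := ((x.1.2, x.2.2.1), (x.1.1, x.2.1.1), (x.2.2.2, x.2.1.2))
  invFun l := ((l.2.1.1, l.1.1), (l.2.1.2, l.2.2.2), (l.1.2, l.2.2.1))
  left_inv _ := rfl
  right_inv _ := rfl

def partyWitness (n : ℕ) : Matrix (Triple n) (Triple n) ℂ :=
  (witness n).submatrix (linkEquiv n) (linkEquiv n)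

lemma witness_submatrix_linkEquivA :
    (witness n).submatrix (linkEquivA n) (linkEquivA n) = partyWitness n := by
  conv_rhs => rw [partyWitness, ← witness_submatrix_rotate, submatrix_submatrix]
  rfl

lemma witness_submatrix_linkEquivB :
    (witness n).submatrix (linkEquivB n) (linkEquivB n) = partyWitness n := by
  conv_rhs => rw [partyWitness, ← witness_submatrix_swap, submatrix_submatrix]
  rfl

lemma re_partyWitness_le_of_prodAcross3 [NeZero n] {u : Triple n → ℂ} (hu : ProdAcross3 u) :
    (star u ⬝ᵥ (partyWitness n *ᵥ u)).re ≤ (star u ⬝ᵥ u).re := by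
  rcases hu with ⟨f, g, hfg⟩ | ⟨f, g, hfg⟩ | ⟨f, g, hfg⟩
  · rw [← witness_submatrix_linkEquivA]
    exact re_witness_submatrix_le_of_product _ u f (fun y => g ((y.2.1, y.1.1), (y.2.2, y.1.2)))
      fun _ => hfg _
  · rw [← witness_submatrix_linkEquivB]
    exact re_witness_submatrix_le_of_product _ u f (fun y => g ((y.2.1, y.1.1), (y.1.2, y.2.2)))
      fun _ => hfg _
  · exact re_witness_submatrix_le_of_product _ u f (fun y => g ((y.1.1, y.2.1), (y.1.2, y.2.2)))
      fun _ => hfg _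

lemma triangleNet_eq_submatrix (p : ℝ) :
    triangleNet n p = (isoState n p ⊗ₖ (isoState n p ⊗ₖ isoState n p)).submatrix (linkEquiv n)
      (linkEquiv n) := by
  ext x y
  simp [triangleNet, linkEquiv, mul_assoc]

lemma trace_partyWitness_mul_triangleNet [NeZero n] (p : ℝ) :
    trace (partyWitness n * triangleNet n p) = (witnessValue n p : ℂ) := by
  rw [partyWitness, triangleNet_eq_submatrix, submatrix_mul_equiv, trace_submatrix_equiv,
    trace_witness_mul_kronecker_isoState]

/-- `witnessValue 2 p - 1 = 3q (q² + q - 1)` with `q = (3p + 1)/4`. -/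
lemma one_lt_witnessValue_two {p : ℝ} (hp : (2 * Real.sqrt 5 - 3) / 3 < p) :
    1 < witnessValue 2 p := by
  rw [witnessValue]
  set q := p + (1 - p) / (2 : ℕ) ^ 2
  have h5 : Real.sqrt 5 ^ 2 = 5 := Real.sq_sqrt (by norm_num)
  have hs : 2 < Real.sqrt 5 := by nlinarith [Real.sqrt_nonneg 5]
  have hq : (Real.sqrt 5 - 1) / 2 < q := by
    simp only [q]
    push_cast
    linarith
  have key : 0 < q * (q - (Real.sqrt 5 - 1) / 2) * (q + (Real.sqrt 5 + 1) / 2) := by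
    apply mul_pos (mul_pos _ _) _ <;> linarith
  push_cast
  nlinarith [key]

end TriangleNetwork

open TriangleNetwork

theorem triangle_network_GME_general (p : ℝ)
    (hp : (2 * Real.sqrt 5 - 3) / 3 < p) :
    ¬ Bisep3 (triangleNet 2 p) := by
  rintro ⟨m, w, u, hw0, hw1, hu, hρ⟩
  have hsep := re_trace_mul_sum_vecProj_le (partyWitness 2) w hw0 hw1 u fun k =>
    (re_partyWitness_le_of_prodAcross3 (hu k).2).trans_eq (congrArg Complex.re (hu k).1)
  rw [← hρ, trace_partyWitness_mul_triangleNet, Complex.ofReal_re] at hsep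
  exact (one_lt_witnessValue_two hp).not_ge hsep

/-- **GME of the qubit triangle network.** If `p > (2√5 − 3)/3`, the triangle network of
2-dimensional isotropic states, viewed as a tripartite state of `A = (A₁, A₂)`,
`B = (B₁, B₂)`, `C = (C₁, C₂)`, is genuinely multipartite entangled. -/
theorem triangle_network_GME (p : ℝ) (hp0 : 0 ≤ p) (hp1 : p ≤ 1)
    (hp : (2 * Real.sqrt 5 - 3) / 3 < p) :
    ¬ Bisep3 (triangleNet 2 p) :=
  triangle_network_GME_general p hp
end
end

section
/- Biseparability of the triangle network of isotropic states: let d ≥ 2 and p ∈ [0,1] with p ≤ 3/(3 + 2d). Then the state ρ_p ⊗ ρ_p ⊗ ρ_p, where the three d-dimensional isotropic states are shared between subsystem pairs A₁B₁, A₂C₁, and B₂C₂ respectively, regarded as a tripartite state of parties A = (A₁,A₂), B = (B₁,B₂), C = (C₁,C₂), is biseparable. -/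
open Matrix Finset
open scoped ComplexOrder

attribute [local instance] Classical.propDecidable

noncomputable section

namespace TriAux

variable {α β γ : Type*} [Fintype α] [Fintype β] [Fintype γ]

def PreBisep (ρ : Matrix (α × β × γ) (α × β × γ) ℂ) : Prop :=
  ∃ (m : ℕ) (w : Fin m → ℝ) (u : Fin m → α × β × γ → ℂ),
    (∀ k, 0 ≤ w k) ∧ (∀ k, ProdAcross3 (u k)) ∧
    ρ = ∑ k, (w k : ℂ) • vecProj (u k)

lemma preBisep_of (ι : Type) [Fintype ι] (w : ι → ℝ) (v : ι → α × β × γ → ℂ)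
    (hw : ∀ i, 0 ≤ w i) (hp : ∀ i, ProdAcross3 (v i)) :
    PreBisep (∑ i, (w i : ℂ) • vecProj (v i)) := by
  classical
  refine ⟨Fintype.card ι, w ∘ (Fintype.equivFin ι).symm, v ∘ (Fintype.equivFin ι).symm,
    fun k => hw _, fun k => hp _, ?_⟩
  exact (Equiv.sum_comp (Fintype.equivFin ι).symm
    (fun i => (w i : ℂ) • vecProj (v i))).symm

lemma PreBisep.add {ρ σ : Matrix (α × β × γ) (α × β × γ) ℂ}
    (h1 : PreBisep ρ) (h2 : PreBisep σ) : PreBisep (ρ + σ) := by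
  obtain ⟨m, w, u, hw, hp, rfl⟩ := h1
  obtain ⟨m', w', u', hw', hp', rfl⟩ := h2
  have := preBisep_of (Fin m ⊕ Fin m') (Sum.elim w w') (Sum.elim u u')
    (fun i => by cases i <;> simp [hw, hw']) (fun i => by cases i <;> simp [hp, hp'])
  simpa [Fintype.sum_sum_type] using this

lemma vecProj_zero : vecProj (0 : (α × β × γ) → ℂ) = 0 := by
  ext i j; simp [vecProj]

lemma trace_vecProj (v : (α × β × γ) → ℂ) :
    (vecProj v).trace = ((∑ q, Complex.normSq (v q) : ℝ) : ℂ) := by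
  simp only [Matrix.trace, Matrix.diag, vecProj, Matrix.of_apply]
  push_cast
  refine Finset.sum_congr rfl fun q _ => ?_
  rw [← Complex.mul_conj]
  rfl

lemma PreBisep.bisep3 [Nonempty α] [Nonempty β] [Nonempty γ]
    {ρ : Matrix (α × β × γ) (α × β × γ) ℂ}
    (h : PreBisep ρ) (htr : ρ.trace = 1) : Bisep3 ρ := by
  classical
  obtain ⟨m, w, u, hw, hp, rfl⟩ := h
  set n : Fin m → ℝ := fun k => ∑ q, Complex.normSq (u k q) with hn
  have hn0 : ∀ k, 0 ≤ n k := fun k => Finset.sum_nonneg fun q _ => Complex.normSq_nonneg _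
  obtain ⟨a0⟩ := (inferInstance : Nonempty α)
  obtain ⟨b0⟩ := (inferInstance : Nonempty β)
  obtain ⟨c0⟩ := (inferInstance : Nonempty γ)
  set q₀ : α × β × γ := (a0, b0, c0) with hq₀
  set u₀ : α × β × γ → ℂ := fun q => if q = q₀ then 1 else 0 with hu₀
  have hu₀unit : UnitVec u₀ := by
    simp only [UnitVec, hu₀]
    rw [Finset.sum_eq_single q₀] <;> simp +contextual
  have hu₀prod : ProdAcross3 u₀ := by
    refine Or.inl ⟨fun a => if a = q₀.1 then 1 else 0, fun bc => if bc = q₀.2 then 1 else 0,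
      fun q => ?_⟩
    by_cases hq : q = q₀
    · simp [hu₀, hq]
    · by_cases h1 : q.1 = q₀.1
      · have h2 : q.2 ≠ q₀.2 := fun h => hq (Prod.ext h1 h)
        simp [hu₀, hq, h1, h2]
      · simp [hu₀, hq, h1]
  set u' : Fin m → α × β × γ → ℂ := fun k =>
    if n k = 0 then u₀ else ((Real.sqrt (n k))⁻¹ : ℝ) • u k with hu'
  set w' : Fin m → ℝ := fun k => w k * n k with hw'
  have hzero : ∀ k, n k = 0 → u k = 0 := by
    intro k hk
    funext q
    have := (Finset.sum_eq_zero_iff_of_nonneg (fun q _ => Complex.normSq_nonneg (u k q))).1 hk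
      q (Finset.mem_univ q)
    exact Complex.normSq_eq_zero.1 this
  have hsmul : ∀ (r : ℝ) (v : α × β × γ → ℂ),
      vecProj ((r : ℝ) • v) = (((r ^ 2 : ℝ)) : ℂ) • vecProj v := by
    intro r v
    ext i j
    simp [vecProj, Matrix.smul_apply, Complex.real_smul, star_mul']
    push_cast
    ring
  have key : ∀ k, (w k : ℂ) • vecProj (u k) = (w' k : ℂ) • vecProj (u' k) := by
    intro k
    by_cases hk : n k = 0
    · simp [hu', hw', hk, hzero k hk, vecProj_zero]
    · have hnk : 0 < n k := lt_of_le_of_ne (hn0 k) (Ne.symm hk)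
      simp only [hu', hw', if_neg hk, hsmul]
      rw [smul_smul]
      congr 1
      have h2 : ((Real.sqrt (n k))⁻¹ : ℝ) ^ 2 = (n k)⁻¹ := by
        rw [← Real.sqrt_inv]
        exact Real.sq_sqrt (by positivity)
      rw [h2]
      push_cast
      field_simp
  have hunit : ∀ k, UnitVec (u' k) := by
    intro k
    by_cases hk : n k = 0
    · simpa [hu', hk] using hu₀unit
    · have hnk : 0 < n k := lt_of_le_of_ne (hn0 k) (Ne.symm hk)
      simp only [hu', if_neg hk, UnitVec]
      have hq : ∀ q : α × β × γ,
          star ((((Real.sqrt (n k))⁻¹ : ℝ) • u k) q) * (((Real.sqrt (n k))⁻¹ : ℝ) • u k) q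
          = (((((Real.sqrt (n k))⁻¹)^2 : ℝ) : ℂ)) * ((Complex.normSq (u k q) : ℝ) : ℂ) := by
        intro q
        have hns : star (u k q) * u k q = ((Complex.normSq (u k q) : ℝ) : ℂ) := by
          rw [Complex.normSq_eq_conj_mul_self]; rfl
        have hr : star ((((Real.sqrt (n k))⁻¹ : ℝ) : ℂ)) = (((Real.sqrt (n k))⁻¹ : ℝ) : ℂ) := by
          rw [Complex.star_def, Complex.conj_ofReal]
        simp only [Pi.smul_apply, Complex.real_smul, star_mul', hr]
        rw [← hns]
        push_cast
        ring
      rw [Finset.sum_congr rfl fun q _ => hq q, ← Finset.mul_sum]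
      have h2 : ((Real.sqrt (n k))⁻¹ : ℝ) ^ 2 = (n k)⁻¹ := by
        rw [← Real.sqrt_inv]
        exact Real.sq_sqrt (by positivity)
      rw [h2]
      rw [show ∑ q : α × β × γ, ((Complex.normSq (u k q) : ℝ) : ℂ) = ((n k : ℝ) : ℂ) by
        push_cast [hn]; rfl]
      rw [← Complex.ofReal_mul]
      norm_num [inv_mul_cancel₀ hk]
  have hsum : ∑ k, w' k = 1 := by
    have : (∑ k, (w k : ℂ) • vecProj (u k)).trace = ((∑ k, w' k : ℝ) : ℂ) := by
      rw [Matrix.trace_sum]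
      push_cast
      refine Finset.sum_congr rfl fun k _ => ?_
      rw [Matrix.trace_smul, trace_vecProj, hw', hn]
      rw [smul_eq_mul]
      push_cast
      ring
    rw [htr] at this
    exact_mod_cast this.symm
  have hprod : ∀ k, ProdAcross3 (u' k) := by
    intro k
    by_cases hk : n k = 0
    · simpa [hu', hk] using hu₀prod
    · simp only [hu', if_neg hk]
      rcases hp k with ⟨f, g, hfg⟩ | ⟨f, g, hfg⟩ | ⟨f, g, hfg⟩
      · exact Or.inl ⟨fun a => (((Real.sqrt (n k))⁻¹ : ℝ) : ℂ) * f a, g, fun q => by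
          simp [hfg q, Complex.real_smul]; ring⟩
      · exact Or.inr (Or.inl ⟨fun b => (((Real.sqrt (n k))⁻¹ : ℝ) : ℂ) * f b, g, fun q => by
          simp [hfg q, Complex.real_smul]; ring⟩)
      · exact Or.inr (Or.inr ⟨fun c => (((Real.sqrt (n k))⁻¹ : ℝ) : ℂ) * f c, g, fun q => by
          simp [hfg q, Complex.real_smul]; ring⟩)
  exact ⟨m, w', u', fun k => mul_nonneg (hw k) (hn0 k), hsum,
    fun k => ⟨hunit k, hprod k⟩, Finset.sum_congr rfl fun k _ => key k⟩


lemma geom4 (a b : ℕ) (ha : a ≤ 2) (hb : b ≤ 2) :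
    ∑ s : Fin 4, Complex.I ^ ((s:ℕ)*a) * (-Complex.I) ^ ((s:ℕ)*b)
      = if a = b then 4 else 0 := by
  interval_cases a <;> interval_cases b <;>
    rw [Fin.sum_univ_four, show ((0:Fin 4):ℕ) = 0 from rfl, show ((1:Fin 4):ℕ) = 1 from rfl,
      show ((2:Fin 4):ℕ) = 2 from rfl, show ((3:Fin 4):ℕ) = 3 from rfl] <;>
    norm_num <;> simp [pow_succ, Complex.I_mul_I] <;> ring_nf <;>
    simp [pow_succ, Complex.I_mul_I] <;> ring

variable {ι : Type*} [Fintype ι] [DecidableEq ι]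

/-- one factor of the phase product -/
def fac (i j k l : ι) (t : ι) (s : Fin 4) : ℂ :=
  Complex.I ^ ((s:ℕ) * ((if t = i then 1 else 0) + (if t = l then 1 else 0))) *
  (-Complex.I) ^ ((s:ℕ) * ((if t = j then 1 else 0) + (if t = k then 1 else 0)))

lemma fac_val (i j k l : ι) (t : ι) :
    ∑ s : Fin 4, fac i j k l t s =
      if ((if t = i then 1 else 0) + (if t = l then 1 else 0) : ℕ)
         = ((if t = j then 1 else 0) + (if t = k then 1 else 0) : ℕ) then 4 else 0 := by
  exact geom4 _ _ (by split_ifs <;> omega) (by split_ifs <;> omega)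

lemma phase_term (i j k l : ι) (ω : ι → Fin 4) :
    (Complex.I ^ ((ω i : ℕ)) * (-Complex.I) ^ ((ω j : ℕ))) *
      star (Complex.I ^ ((ω k : ℕ)) * (-Complex.I) ^ ((ω l : ℕ)))
    = ∏ t, fac i j k l t (ω t) := by
  have hs1 : star (Complex.I ^ ((ω k : ℕ))) = (-Complex.I) ^ ((ω k : ℕ)) := by
    rw [star_pow, Complex.star_def, Complex.conj_I]
  have hs2 : star ((-Complex.I) ^ ((ω l : ℕ))) = Complex.I ^ ((ω l : ℕ)) := by
    rw [star_pow, star_neg, Complex.star_def, Complex.conj_I, neg_neg]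
  rw [star_mul', hs1, hs2]
  unfold fac
  rw [Finset.prod_mul_distrib, Finset.prod_pow_eq_pow_sum, Finset.prod_pow_eq_pow_sum]
  have e1 : ∑ t, (ω t : ℕ) * ((if t = i then 1 else 0) + (if t = l then 1 else 0))
      = (ω i : ℕ) + (ω l : ℕ) := by
    simp only [mul_add]
    rw [Finset.sum_add_distrib]
    congr 1
    · rw [Finset.sum_congr rfl (fun t _ => by rw [mul_ite, mul_one, mul_zero]),
        Finset.sum_ite_eq' univ i (fun t => (ω t : ℕ))]
      simp
    · rw [Finset.sum_congr rfl (fun t _ => by rw [mul_ite, mul_one, mul_zero]),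
        Finset.sum_ite_eq' univ l (fun t => (ω t : ℕ))]
      simp
  have e2 : ∑ t, (ω t : ℕ) * ((if t = j then 1 else 0) + (if t = k then 1 else 0))
      = (ω j : ℕ) + (ω k : ℕ) := by
    simp only [mul_add]
    rw [Finset.sum_add_distrib]
    congr 1
    · rw [Finset.sum_congr rfl (fun t _ => by rw [mul_ite, mul_one, mul_zero]),
        Finset.sum_ite_eq' univ j (fun t => (ω t : ℕ))]
      simp
    · rw [Finset.sum_congr rfl (fun t _ => by rw [mul_ite, mul_one, mul_zero]),
        Finset.sum_ite_eq' univ k (fun t => (ω t : ℕ))]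
      simp
  rw [e1, e2, pow_add, pow_add]
  ring

lemma phase_sum (i j k l : ι) :
    ∑ ω : ι → Fin 4,
      (Complex.I ^ ((ω i : ℕ)) * (-Complex.I) ^ ((ω j : ℕ))) *
        star (Complex.I ^ ((ω k : ℕ)) * (-Complex.I) ^ ((ω l : ℕ)))
    = (4:ℂ) ^ (Fintype.card ι) *
      ((if i = j then 1 else 0) * (if k = l then 1 else 0)
        + (if i = k then 1 else 0) * (if j = l then 1 else 0)
        - if i = j ∧ j = k ∧ k = l then 1 else 0) := by
  rw [Finset.sum_congr rfl (fun ω _ => phase_term i j k l ω)]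
  rw [← Fintype.piFinset_univ, ← Finset.prod_univ_sum]
  rw [Finset.prod_congr rfl (fun t _ => fac_val i j k l t)]
  by_cases hP : ∀ t : ι, ((if t = i then 1 else 0) + (if t = l then 1 else 0) : ℕ)
      = ((if t = j then 1 else 0) + (if t = k then 1 else 0) : ℕ)
  · rw [Finset.prod_congr rfl (fun t _ => if_pos (hP t)), Finset.prod_const]
    have hs : ∀ a : ι, (a = i ∨ a = l) ↔ (a = j ∨ a = k) := by
      intro a
      have h := hP a
      by_cases h1 : a = i <;> by_cases h2 : a = l <;> by_cases h3 : a = j <;>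
        by_cases h4 : a = k <;>
        (first | rw [if_pos h1] at h | rw [if_neg h1] at h) <;>
        (first | rw [if_pos h2] at h | rw [if_neg h2] at h) <;>
        (first | rw [if_pos h3] at h | rw [if_neg h3] at h) <;>
        (first | rw [if_pos h4] at h | rw [if_neg h4] at h) <;>
        first
          | omega
          | tauto
    have hPQ : (i = j ∧ k = l) ∨ (i = k ∧ j = l) := by
      by_cases hij : i = j
      · left
        refine ⟨hij, ?_⟩
        rcases (hs k).2 (Or.inr rfl) with hk | hk
        · rcases (hs l).1 (Or.inr rfl) with hl | hl
          · exact hk.trans (hij.trans hl.symm)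
          · exact hl.symm
        · exact hk
      · right
        have hik : i = k := by
          rcases (hs i).1 (Or.inl rfl) with h | h
          · exact absurd h hij
          · exact h
        refine ⟨hik, ?_⟩
        rcases (hs j).2 (Or.inl rfl) with hj | hj
        · exact absurd hj.symm hij
        · exact hj
    have hval : ((if i = j then (1:ℂ) else 0) * (if k = l then 1 else 0)
        + (if i = k then 1 else 0) * (if j = l then 1 else 0)
        - if i = j ∧ j = k ∧ k = l then 1 else 0) = 1 := by
      by_cases h1 : i = j <;> by_cases h2 : k = l <;> by_cases h3 : i = k <;>
        by_cases h4 : j = l <;>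
        simp [h1, h2, h3, h4] <;> first
          | (exfalso; tauto)
          | (subst_eqs; tauto)
          | ring
    rw [hval, Finset.card_univ, mul_one]
  · push_neg at hP
    obtain ⟨t0, ht0⟩ := hP
    have hz : (∏ t : ι, if ((if t = i then 1 else 0) + if t = l then 1 else 0)
        = ((if t = j then 1 else 0) + if t = k then 1 else 0) then (4:ℂ) else 0) = 0 :=
      Finset.prod_eq_zero (Finset.mem_univ t0) (if_neg ht0)
    rw [hz]
    have hnP : ¬ (i = j ∧ k = l) ∧ ¬ (i = k ∧ j = l) := by
      constructor
      · rintro ⟨h1, h2⟩; subst h1; subst h2; exact ht0 rfl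
      · rintro ⟨h1, h2⟩; subst h1; subst h2; exact ht0 (add_comm _ _)
    have hval : ((if i = j then (1:ℂ) else 0) * (if k = l then 1 else 0)
        + (if i = k then 1 else 0) * (if j = l then 1 else 0)
        - if i = j ∧ j = k ∧ k = l then 1 else 0) = 0 := by
      by_cases h1 : i = j <;> by_cases h2 : k = l <;> by_cases h3 : i = k <;>
        by_cases h4 : j = l <;>
        simp [h1, h2, h3, h4] at hnP ⊢ <;> tauto
    rw [hval, mul_zero]


section Key
variable {ι : Type*} [Fintype ι] [DecidableEq ι]

abbrev Kt (ι : Type*) := (ι → Fin 4) ⊕ ι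

def cL : Kt ι → ι → ℂ := fun s x =>
  Sum.elim (fun ω : ι → Fin 4 => Complex.I ^ ((ω x : ℕ))) (fun m => if x = m then 1 else 0) s

def cR : Kt ι → ι → ℂ := fun s x =>
  Sum.elim (fun ω : ι → Fin 4 => (-Complex.I) ^ ((ω x : ℕ))) (fun m => if x = m then 1 else 0) s

def cw (ι : Type*) [Fintype ι] : Kt ι → ℝ :=
  Sum.elim (fun _ => ((4:ℝ) ^ (Fintype.card ι))⁻¹) (fun _ => 1)

lemma cw_nonneg (s : Kt ι) : 0 ≤ cw ι s := by
  cases s <;> simp [cw] <;> positivity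

lemma dd (i k : ι) :
    ∑ m : ι, ((if i = m then (1:ℂ) else 0) * star (if k = m then (1:ℂ) else 0))
      = if i = k then 1 else 0 := by
  have : ∀ m : ι, ((if i = m then (1:ℂ) else 0) * star (if k = m then (1:ℂ) else 0))
      = if i = m ∧ k = m then 1 else 0 := by
    intro m
    by_cases h1 : i = m <;> by_cases h2 : k = m <;> simp [h1, h2]
  rw [Finset.sum_congr rfl fun m _ => this m]
  by_cases h : i = k
  · subst h
    simp only [and_self]
    rw [Finset.sum_ite_eq univ i (fun _ => (1:ℂ))]
    simp
  · refine (Finset.sum_eq_zero fun m _ => ?_).trans (by simp [h])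
    by_cases h1 : i = m <;> by_cases h2 : k = m <;> simp [h1, h2]
    exact h (h1.trans h2.symm)

lemma sum_factor {κ₁ κ₂ : Type*} [Fintype κ₁] [Fintype κ₂] (C : ℂ) (f : κ₁ → ℂ) (g : κ₂ → ℂ)
    (F : κ₁ × κ₂ → ℂ) (hF : ∀ s t, F (s, t) = C * f s * g t) :
    ∑ st : κ₁ × κ₂, F st = C * (∑ s, f s) * (∑ t, g t) := by
  calc ∑ st : κ₁ × κ₂, F st = ∑ s, ∑ t, C * f s * g t := by
        rw [Fintype.sum_prod_type]
        exact Finset.sum_congr rfl fun s _ => Finset.sum_congr rfl fun t _ => hF s t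
    _ = ∑ s, (C * f s) * (∑ t, g t) :=
        Finset.sum_congr rfl fun s _ => (Finset.mul_sum _ _ _).symm
    _ = (∑ s, C * f s) * (∑ t, g t) := (Finset.sum_mul _ _ _).symm
    _ = C * (∑ s, f s) * (∑ t, g t) := by rw [← Finset.mul_sum]

lemma ddPair (i j k l : ι) :
    ∑ mn : ι × ι, (((if i = mn.1 then (1:ℂ) else 0) * (if j = mn.2 then 1 else 0))
      * star ((if k = mn.1 then (1:ℂ) else 0) * (if l = mn.2 then 1 else 0)))
    = (if i = k then 1 else 0) * (if j = l then 1 else 0) := by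
  rw [sum_factor (1:ℂ)
      (fun m => (if i = m then (1:ℂ) else 0) * star (if k = m then (1:ℂ) else 0))
      (fun n => (if j = n then (1:ℂ) else 0) * star (if l = n then (1:ℂ) else 0))
      _ (fun m n => by simp only [star_mul']; ring)]
  rw [dd, dd]
  ring

lemma key (i j k l : ι) :
    ∑ s : Kt ι, ((cw ι s : ℝ) : ℂ) * ((cL s i * cR s j) * star (cL s k * cR s l))
    = (if i = j then 1 else 0) * (if k = l then 1 else 0)
      + (if i = k then 1 else 0) * (if j = l then 1 else 0) := by
  rw [Fintype.sum_sum_type]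
  have h1 : ∑ ω : ι → Fin 4, ((cw ι (Sum.inl ω) : ℝ) : ℂ)
      * ((cL (Sum.inl ω) i * cR (Sum.inl ω) j) * star (cL (Sum.inl ω) k * cR (Sum.inl ω) l))
      = ((if i = j then (1:ℂ) else 0) * (if k = l then 1 else 0)
        + (if i = k then 1 else 0) * (if j = l then 1 else 0)
        - if i = j ∧ j = k ∧ k = l then 1 else 0) := by
    simp only [cL, cR, cw, Sum.elim_inl]
    rw [← Finset.mul_sum, phase_sum i j k l, ← mul_assoc]
    rw [show ((((4:ℝ) ^ (Fintype.card ι))⁻¹ : ℝ) : ℂ) = ((4:ℂ) ^ (Fintype.card ι))⁻¹ by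
      push_cast; ring]
    rw [inv_mul_cancel₀ (by positivity), one_mul]
  have h2 : ∑ m : ι, ((cw ι (Sum.inr m) : ℝ) : ℂ)
      * ((cL (Sum.inr m) i * cR (Sum.inr m) j) * star (cL (Sum.inr m) k * cR (Sum.inr m) l))
      = if i = j ∧ j = k ∧ k = l then 1 else 0 := by
    simp only [cL, cR, cw, Sum.elim_inr, Complex.ofReal_one, one_mul]
    have hterm : ∀ m : ι, ((if i = m then (1:ℂ) else 0) * (if j = m then 1 else 0))
        * star ((if k = m then (1:ℂ) else 0) * (if l = m then 1 else 0))
        = if i = m ∧ j = m ∧ k = m ∧ l = m then 1 else 0 := by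
      intro m
      by_cases e1 : i = m <;> by_cases e2 : j = m <;> by_cases e3 : k = m <;>
        by_cases e4 : l = m <;> simp [e1, e2, e3, e4]
    rw [Finset.sum_congr rfl fun m _ => hterm m]
    by_cases h : i = j ∧ j = k ∧ k = l
    · obtain ⟨hij, hjk, hkl⟩ := h
      rw [if_pos ⟨hij, hjk, hkl⟩]
      subst hij; subst hjk; subst hkl
      simp only [and_self]
      rw [Finset.sum_ite_eq univ i (fun _ => (1:ℂ))]
      simp
    · rw [if_neg h]
      refine Finset.sum_eq_zero fun m _ => ?_
      rw [if_neg ?_]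
      rintro ⟨e1, e2, e3, e4⟩
      exact h ⟨e1.trans e2.symm, e2.trans e3.symm, e3.trans e4.symm⟩
  rw [h1, h2]
  ring

end Key

section Tri
variable (d : ℕ)

def Phi : Matrix (Fin d × Fin d) (Fin d × Fin d) ℂ := vecProj (maxEntVec d)

def triM (P Q R : Matrix (Fin d × Fin d) (Fin d × Fin d) ℂ) :
    Matrix ((Fin d × Fin d) × (Fin d × Fin d) × (Fin d × Fin d))
           ((Fin d × Fin d) × (Fin d × Fin d) × (Fin d × Fin d)) ℂ :=
  Matrix.of fun x y =>
    P (x.1.1, x.2.1.1) (y.1.1, y.2.1.1) *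
    Q (x.1.2, x.2.2.1) (y.1.2, y.2.2.1) *
    R (x.2.1.2, x.2.2.2) (y.2.1.2, y.2.2.2)

lemma iteProd {a b c e : Fin d} :
    (if (a, b) = (c, e) then (1:ℂ) else 0) = (if a = c then 1 else 0) * (if b = e then 1 else 0) := by
  by_cases h1 : a = c <;> by_cases h2 : b = e <;> simp [h1, h2, Prod.ext_iff]

lemma phi_apply (hd : 0 < d) (q r : Fin d × Fin d) :
    (d : ℂ) * Phi d q r = (if q.1 = q.2 then 1 else 0) * (if r.1 = r.2 then 1 else 0) := by
  have hc : ((((Real.sqrt d)⁻¹ : ℝ) : ℂ)) * star ((((Real.sqrt d)⁻¹ : ℝ) : ℂ))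
      = (((d:ℝ)⁻¹ : ℝ) : ℂ) := by
    rw [Complex.star_def, Complex.conj_ofReal, ← Complex.ofReal_mul]
    congr 1
    rw [← mul_inv, Real.mul_self_sqrt (by positivity)]
  by_cases h1 : q.1 = q.2 <;> by_cases h2 : r.1 = r.2 <;>
    simp only [Phi, vecProj, maxEntVec, Matrix.of_apply, h1, h2, if_true, if_false,
      ite_true, ite_false, star_zero, mul_zero, zero_mul, mul_one, one_mul]
  · rw [hc, ← Complex.ofReal_natCast, ← Complex.ofReal_mul,
      mul_inv_cancel₀ (by positivity : (d:ℝ) ≠ 0)]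
    norm_num

/-- assembly lemma for the cut `AB|C` (edge 1 inside). -/
lemma preBisep_cut1 (ι : Type) [Fintype ι] (w : ι → ℝ) (hw : ∀ t, 0 ≤ w t)
    (v u z : ι → (Fin d × Fin d) → ℂ) :
    PreBisep (∑ t, (w t : ℂ) • vecProj (fun x : (Fin d × Fin d) × (Fin d × Fin d) × (Fin d × Fin d) =>
      v t (x.1.1, x.2.1.1) * u t (x.1.2, x.2.1.2) * z t x.2.2)) := by
  apply preBisep_of _ w _ hw
  intro t
  refine Or.inr (Or.inr ⟨fun c => z t c,
    fun ab => v t (ab.1.1, ab.2.1) * u t (ab.1.2, ab.2.2), fun q => ?_⟩)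
  ring

/-- assembly lemma for the cut `AC|B` (edge 2 inside). -/
lemma preBisep_cut2 (ι : Type) [Fintype ι] (w : ι → ℝ) (hw : ∀ t, 0 ≤ w t)
    (v u z : ι → (Fin d × Fin d) → ℂ) :
    PreBisep (∑ t, (w t : ℂ) • vecProj (fun x : (Fin d × Fin d) × (Fin d × Fin d) × (Fin d × Fin d) =>
      v t (x.1.2, x.2.2.1) * u t x.2.1 * z t (x.1.1, x.2.2.2))) := by
  apply preBisep_of _ w _ hw
  intro t
  refine Or.inr (Or.inl ⟨fun b => u t b,
    fun ac => v t (ac.1.2, ac.2.1) * z t (ac.1.1, ac.2.2), fun q => ?_⟩)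
  ring

/-- assembly lemma for the cut `BC|A` (edge 3 inside). -/
lemma preBisep_cut3 (ι : Type) [Fintype ι] (w : ι → ℝ) (hw : ∀ t, 0 ≤ w t)
    (v u z : ι → (Fin d × Fin d) → ℂ) :
    PreBisep (∑ t, (w t : ℂ) • vecProj (fun x : (Fin d × Fin d) × (Fin d × Fin d) × (Fin d × Fin d) =>
      v t (x.2.1.2, x.2.2.2) * u t x.1 * z t (x.2.1.1, x.2.2.1))) := by
  apply preBisep_of _ w _ hw
  intro t
  refine Or.inl ⟨fun a => u t a,
    fun bc => v t (bc.1.2, bc.2.2) * z t (bc.1.1, bc.2.1), fun q => ?_⟩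
  ring

lemma one_apply_pair {n : Type*} [DecidableEq n] (q r : n × n) :
    (1 : Matrix (n × n) (n × n) ℂ) q r
      = (if q.1 = r.1 then 1 else 0) * (if q.2 = r.2 then 1 else 0) := by
  by_cases e1 : q.1 = r.1 <;> by_cases e2 : q.2 = r.2 <;>
    simp [Matrix.one_apply, Prod.ext_iff, e1, e2]

lemma gh_apply (hd : 0 < d) (q r : Fin d × Fin d) :
    ((d:ℂ) • Phi d + 1) q r
      = (if q.1 = q.2 then 1 else 0) * (if r.1 = r.2 then 1 else 0)
        + (if q.1 = r.1 then 1 else 0) * (if q.2 = r.2 then 1 else 0) := by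
  rw [Matrix.add_apply, Matrix.smul_apply, smul_eq_mul, phi_apply d hd, one_apply_pair]

lemma atomA1 (hd : 0 < d) (w : ℝ) (hw : 0 ≤ w) :
    PreBisep (w • triM d (Phi d) ((d:ℂ) • Phi d + 1) ((d:ℂ) • Phi d + 1)) := by
  have h := preBisep_cut1 d (Kt (Fin d) × Kt (Fin d))
    (fun st => w * (cw (Fin d) st.1 * cw (Fin d) st.2))
    (fun st => mul_nonneg hw (mul_nonneg (cw_nonneg _) (cw_nonneg _)))
    (fun _ => maxEntVec d)
    (fun st e => cL st.1 e.1 * cL st.2 e.2)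
    (fun st e => cR st.1 e.1 * cR st.2 e.2)
  convert h using 1
  ext x y
  rw [Matrix.sum_apply]
  have hs := sum_factor ((w : ℂ) * (Phi d (x.1.1, x.2.1.1) (y.1.1, y.2.1.1)))
    (fun s => ((cw (Fin d) s : ℝ) : ℂ) *
      ((cL s x.1.2 * cR s x.2.2.1) * star (cL s y.1.2 * cR s y.2.2.1)))
    (fun t => ((cw (Fin d) t : ℝ) : ℂ) *
      ((cL t x.2.1.2 * cR t x.2.2.2) * star (cL t y.2.1.2 * cR t y.2.2.2)))
    (fun st => (((w * (cw (Fin d) st.1 * cw (Fin d) st.2) : ℝ) : ℂ) •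
      vecProj (fun x : (Fin d × Fin d) × (Fin d × Fin d) × (Fin d × Fin d) =>
        maxEntVec d (x.1.1, x.2.1.1) * (cL st.1 x.1.2 * cL st.2 x.2.1.2) *
          (cR st.1 x.2.2.1 * cR st.2 x.2.2.2))) x y)
    (fun s t => by
      simp only [vecProj, Matrix.of_apply, Matrix.smul_apply, Phi, smul_eq_mul, star_mul']
      push_cast
      ring)
  rw [hs, key, key]
  rw [Matrix.smul_apply, triM, Matrix.of_apply, gh_apply d hd, gh_apply d hd]
  simp only [smul_eq_mul, Complex.real_smul]
  ring

lemma atomA2 (hd : 0 < d) (w : ℝ) (hw : 0 ≤ w) :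
    PreBisep (w • triM d ((d:ℂ) • Phi d + 1) (Phi d) ((d:ℂ) • Phi d + 1)) := by
  have h := preBisep_cut2 d (Kt (Fin d) × Kt (Fin d))
    (fun st => w * (cw (Fin d) st.1 * cw (Fin d) st.2))
    (fun st => mul_nonneg hw (mul_nonneg (cw_nonneg _) (cw_nonneg _)))
    (fun _ => maxEntVec d)
    (fun st b => cR st.1 b.1 * cL st.2 b.2)
    (fun st ac => cL st.1 ac.1 * cR st.2 ac.2)
  convert h using 1
  ext x y
  rw [Matrix.sum_apply]
  have hs := sum_factor ((w : ℂ) * (Phi d (x.1.2, x.2.2.1) (y.1.2, y.2.2.1)))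
    (fun s => ((cw (Fin d) s : ℝ) : ℂ) *
      ((cL s x.1.1 * cR s x.2.1.1) * star (cL s y.1.1 * cR s y.2.1.1)))
    (fun t => ((cw (Fin d) t : ℝ) : ℂ) *
      ((cL t x.2.1.2 * cR t x.2.2.2) * star (cL t y.2.1.2 * cR t y.2.2.2)))
    (fun st => (((w * (cw (Fin d) st.1 * cw (Fin d) st.2) : ℝ) : ℂ) •
      vecProj (fun x : (Fin d × Fin d) × (Fin d × Fin d) × (Fin d × Fin d) =>
        maxEntVec d (x.1.2, x.2.2.1) * (cR st.1 x.2.1.1 * cL st.2 x.2.1.2) *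
          (cL st.1 x.1.1 * cR st.2 x.2.2.2))) x y)
    (fun s t => by
      simp only [vecProj, Matrix.of_apply, Matrix.smul_apply, Phi, smul_eq_mul, star_mul']
      push_cast
      ring)
  rw [hs, key, key]
  rw [Matrix.smul_apply, triM, Matrix.of_apply, gh_apply d hd, gh_apply d hd]
  simp only [smul_eq_mul, Complex.real_smul]
  ring

lemma atomA3 (hd : 0 < d) (w : ℝ) (hw : 0 ≤ w) :
    PreBisep (w • triM d ((d:ℂ) • Phi d + 1) ((d:ℂ) • Phi d + 1) (Phi d)) := by
  have h := preBisep_cut3 d (Kt (Fin d) × Kt (Fin d))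
    (fun st => w * (cw (Fin d) st.1 * cw (Fin d) st.2))
    (fun st => mul_nonneg hw (mul_nonneg (cw_nonneg _) (cw_nonneg _)))
    (fun _ => maxEntVec d)
    (fun st a => cL st.1 a.1 * cL st.2 a.2)
    (fun st bc => cR st.1 bc.1 * cR st.2 bc.2)
  convert h using 1
  ext x y
  rw [Matrix.sum_apply]
  have hs := sum_factor ((w : ℂ) * (Phi d (x.2.1.2, x.2.2.2) (y.2.1.2, y.2.2.2)))
    (fun s => ((cw (Fin d) s : ℝ) : ℂ) *
      ((cL s x.1.1 * cR s x.2.1.1) * star (cL s y.1.1 * cR s y.2.1.1)))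
    (fun t => ((cw (Fin d) t : ℝ) : ℂ) *
      ((cL t x.1.2 * cR t x.2.2.1) * star (cL t y.1.2 * cR t y.2.2.1)))
    (fun st => (((w * (cw (Fin d) st.1 * cw (Fin d) st.2) : ℝ) : ℂ) •
      vecProj (fun x : (Fin d × Fin d) × (Fin d × Fin d) × (Fin d × Fin d) =>
        maxEntVec d (x.2.1.2, x.2.2.2) * (cL st.1 x.1.1 * cL st.2 x.1.2) *
          (cR st.1 x.2.1.1 * cR st.2 x.2.2.1))) x y)
    (fun s t => by
      simp only [vecProj, Matrix.of_apply, Matrix.smul_apply, Phi, smul_eq_mul, star_mul']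
      push_cast
      ring)
  rw [hs, key, key]
  rw [Matrix.smul_apply, triM, Matrix.of_apply, gh_apply d hd, gh_apply d hd]
  simp only [smul_eq_mul, Complex.real_smul]
  ring

lemma atomB1 (hd : 0 < d) (w : ℝ) (hw : 0 ≤ w) :
    PreBisep (w • triM d (Phi d) 1 1) := by
  have h := preBisep_cut1 d ((Fin d × Fin d) × (Fin d × Fin d))
    (fun _ => w) (fun _ => hw)
    (fun _ => maxEntVec d)
    (fun st ab => (if ab.1 = st.1.1 then 1 else 0) * (if ab.2 = st.2.1 then 1 else 0))
    (fun st cc => (if cc.1 = st.1.2 then 1 else 0) * (if cc.2 = st.2.2 then 1 else 0))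
  convert h using 1
  ext x y
  rw [Matrix.sum_apply]
  have hs := sum_factor ((w : ℂ) * (Phi d (x.1.1, x.2.1.1) (y.1.1, y.2.1.1)))
    (fun s : Fin d × Fin d => ((if x.1.2 = s.1 then (1:ℂ) else 0) * (if x.2.2.1 = s.2 then 1 else 0))
      * star ((if y.1.2 = s.1 then (1:ℂ) else 0) * (if y.2.2.1 = s.2 then 1 else 0)))
    (fun t : Fin d × Fin d => ((if x.2.1.2 = t.1 then (1:ℂ) else 0) * (if x.2.2.2 = t.2 then 1 else 0))
      * star ((if y.2.1.2 = t.1 then (1:ℂ) else 0) * (if y.2.2.2 = t.2 then 1 else 0)))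
    (fun st => (((w : ℝ) : ℂ) •
      vecProj (fun x : (Fin d × Fin d) × (Fin d × Fin d) × (Fin d × Fin d) =>
        maxEntVec d (x.1.1, x.2.1.1) *
          ((if x.1.2 = st.1.1 then 1 else 0) * (if x.2.1.2 = st.2.1 then 1 else 0)) *
          ((if x.2.2.1 = st.1.2 then 1 else 0) * (if x.2.2.2 = st.2.2 then 1 else 0)))) x y)
    (fun s t => by
      simp only [vecProj, Matrix.of_apply, Matrix.smul_apply, Phi, smul_eq_mul, star_mul']
      push_cast
      ring)
  rw [hs, ddPair, ddPair]
  rw [Matrix.smul_apply, triM, Matrix.of_apply, one_apply_pair, one_apply_pair]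
  simp only [smul_eq_mul, Complex.real_smul]
  ring

lemma atomB2 (hd : 0 < d) (w : ℝ) (hw : 0 ≤ w) :
    PreBisep (w • triM d 1 (Phi d) 1) := by
  have h := preBisep_cut2 d ((Fin d × Fin d) × (Fin d × Fin d))
    (fun _ => w) (fun _ => hw)
    (fun _ => maxEntVec d)
    (fun st b => (if b.1 = st.1.2 then 1 else 0) * (if b.2 = st.2.1 then 1 else 0))
    (fun st ac => (if ac.1 = st.1.1 then 1 else 0) * (if ac.2 = st.2.2 then 1 else 0))
  convert h using 1
  ext x y
  rw [Matrix.sum_apply]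
  have hs := sum_factor ((w : ℂ) * (Phi d (x.1.2, x.2.2.1) (y.1.2, y.2.2.1)))
    (fun s : Fin d × Fin d => ((if x.1.1 = s.1 then (1:ℂ) else 0) * (if x.2.1.1 = s.2 then 1 else 0))
      * star ((if y.1.1 = s.1 then (1:ℂ) else 0) * (if y.2.1.1 = s.2 then 1 else 0)))
    (fun t : Fin d × Fin d => ((if x.2.1.2 = t.1 then (1:ℂ) else 0) * (if x.2.2.2 = t.2 then 1 else 0))
      * star ((if y.2.1.2 = t.1 then (1:ℂ) else 0) * (if y.2.2.2 = t.2 then 1 else 0)))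
    (fun st => (((w : ℝ) : ℂ) •
      vecProj (fun x : (Fin d × Fin d) × (Fin d × Fin d) × (Fin d × Fin d) =>
        maxEntVec d (x.1.2, x.2.2.1) *
          ((if x.2.1.1 = st.1.2 then 1 else 0) * (if x.2.1.2 = st.2.1 then 1 else 0)) *
          ((if x.1.1 = st.1.1 then 1 else 0) * (if x.2.2.2 = st.2.2 then 1 else 0)))) x y)
    (fun s t => by
      simp only [vecProj, Matrix.of_apply, Matrix.smul_apply, Phi, smul_eq_mul, star_mul']
      push_cast
      ring)
  rw [hs, ddPair, ddPair]
  rw [Matrix.smul_apply, triM, Matrix.of_apply, one_apply_pair, one_apply_pair]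
  simp only [smul_eq_mul, Complex.real_smul]
  ring

lemma atomB3 (hd : 0 < d) (w : ℝ) (hw : 0 ≤ w) :
    PreBisep (w • triM d 1 1 (Phi d)) := by
  have h := preBisep_cut3 d ((Fin d × Fin d) × (Fin d × Fin d))
    (fun _ => w) (fun _ => hw)
    (fun _ => maxEntVec d)
    (fun st a => (if a.1 = st.1.1 then 1 else 0) * (if a.2 = st.2.1 then 1 else 0))
    (fun st bc => (if bc.1 = st.1.2 then 1 else 0) * (if bc.2 = st.2.2 then 1 else 0))
  convert h using 1
  ext x y
  rw [Matrix.sum_apply]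
  have hs := sum_factor ((w : ℂ) * (Phi d (x.2.1.2, x.2.2.2) (y.2.1.2, y.2.2.2)))
    (fun s : Fin d × Fin d => ((if x.1.1 = s.1 then (1:ℂ) else 0) * (if x.2.1.1 = s.2 then 1 else 0))
      * star ((if y.1.1 = s.1 then (1:ℂ) else 0) * (if y.2.1.1 = s.2 then 1 else 0)))
    (fun t : Fin d × Fin d => ((if x.1.2 = t.1 then (1:ℂ) else 0) * (if x.2.2.1 = t.2 then 1 else 0))
      * star ((if y.1.2 = t.1 then (1:ℂ) else 0) * (if y.2.2.1 = t.2 then 1 else 0)))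
    (fun st => (((w : ℝ) : ℂ) •
      vecProj (fun x : (Fin d × Fin d) × (Fin d × Fin d) × (Fin d × Fin d) =>
        maxEntVec d (x.2.1.2, x.2.2.2) *
          ((if x.1.1 = st.1.1 then 1 else 0) * (if x.1.2 = st.2.1 then 1 else 0)) *
          ((if x.2.1.1 = st.1.2 then 1 else 0) * (if x.2.2.1 = st.2.2 then 1 else 0)))) x y)
    (fun s t => by
      simp only [vecProj, Matrix.of_apply, Matrix.smul_apply, Phi, smul_eq_mul, star_mul']
      push_cast
      ring)
  rw [hs, ddPair, ddPair]
  rw [Matrix.smul_apply, triM, Matrix.of_apply, one_apply_pair, one_apply_pair]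
  simp only [smul_eq_mul, Complex.real_smul]
  ring

lemma atomF (hd : 0 < d) (w : ℝ) (hw : 0 ≤ w) :
    PreBisep (w • triM d 1 1 1) := by
  have h := preBisep_cut1 d ((Fin d × Fin d) × ((Fin d × Fin d) × (Fin d × Fin d)))
    (fun _ => w) (fun _ => hw)
    (fun t e => (if e.1 = t.1.1 then 1 else 0) * (if e.2 = t.1.2 then 1 else 0))
    (fun t ab => (if ab.1 = t.2.1.1 then 1 else 0) * (if ab.2 = t.2.2.1 then 1 else 0))
    (fun t cc => (if cc.1 = t.2.1.2 then 1 else 0) * (if cc.2 = t.2.2.2 then 1 else 0))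
  convert h using 1
  ext x y
  rw [Matrix.sum_apply]
  have hg := sum_factor (1 : ℂ)
    (fun s : Fin d × Fin d => ((if x.1.2 = s.1 then (1:ℂ) else 0) * (if x.2.2.1 = s.2 then 1 else 0))
      * star ((if y.1.2 = s.1 then (1:ℂ) else 0) * (if y.2.2.1 = s.2 then 1 else 0)))
    (fun t : Fin d × Fin d => ((if x.2.1.2 = t.1 then (1:ℂ) else 0) * (if x.2.2.2 = t.2 then 1 else 0))
      * star ((if y.2.1.2 = t.1 then (1:ℂ) else 0) * (if y.2.2.2 = t.2 then 1 else 0)))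
    (fun st => (((if x.1.2 = st.1.1 then (1:ℂ) else 0) * (if x.2.1.2 = st.2.1 then 1 else 0)
        * ((if x.2.2.1 = st.1.2 then 1 else 0) * (if x.2.2.2 = st.2.2 then 1 else 0)))
      * star ((if y.1.2 = st.1.1 then (1:ℂ) else 0) * (if y.2.1.2 = st.2.1 then 1 else 0)
        * ((if y.2.2.1 = st.1.2 then 1 else 0) * (if y.2.2.2 = st.2.2 then 1 else 0)))))
    (fun s t => by simp only [star_mul']; ring)
  have hs := sum_factor ((w : ℂ))
    (fun mn : Fin d × Fin d =>
      ((if x.1.1 = mn.1 then (1:ℂ) else 0) * (if x.2.1.1 = mn.2 then 1 else 0))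
        * star ((if y.1.1 = mn.1 then (1:ℂ) else 0) * (if y.2.1.1 = mn.2 then 1 else 0)))
    (fun t' : (Fin d × Fin d) × (Fin d × Fin d) =>
      ((if x.1.2 = t'.1.1 then (1:ℂ) else 0) * (if x.2.1.2 = t'.2.1 then 1 else 0)
        * ((if x.2.2.1 = t'.1.2 then 1 else 0) * (if x.2.2.2 = t'.2.2 then 1 else 0)))
      * star ((if y.1.2 = t'.1.1 then (1:ℂ) else 0) * (if y.2.1.2 = t'.2.1 then 1 else 0)
        * ((if y.2.2.1 = t'.1.2 then 1 else 0) * (if y.2.2.2 = t'.2.2 then 1 else 0))))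
    (fun st => (((w : ℝ) : ℂ) •
      vecProj (fun x : (Fin d × Fin d) × (Fin d × Fin d) × (Fin d × Fin d) =>
        ((if x.1.1 = st.1.1 then (1:ℂ) else 0) * (if x.2.1.1 = st.1.2 then 1 else 0)) *
          ((if x.1.2 = st.2.1.1 then 1 else 0) * (if x.2.1.2 = st.2.2.1 then 1 else 0)) *
          ((if x.2.2.1 = st.2.1.2 then 1 else 0) * (if x.2.2.2 = st.2.2.2 then 1 else 0)))) x y)
    (fun s t => by
      simp only [vecProj, Matrix.of_apply, Matrix.smul_apply, smul_eq_mul, star_mul']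
      push_cast
      ring)
  rw [hs, hg, ddPair, ddPair, ddPair]
  rw [Matrix.smul_apply, triM, Matrix.of_apply, one_apply_pair, one_apply_pair, one_apply_pair]
  simp only [smul_eq_mul, Complex.real_smul]
  ring

lemma iteEqPair {A B : Type*} [DecidableEq A] [DecidableEq B] (q r : A × B) :
    (if q = r then (1:ℂ) else 0) = (if q.1 = r.1 then 1 else 0) * (if q.2 = r.2 then 1 else 0) := by
  by_cases e1 : q.1 = r.1 <;> by_cases e2 : q.2 = r.2 <;> simp [Prod.ext_iff, e1, e2]

lemma atomC1 (hd : 0 < d) (w : ℝ) (hw : 0 ≤ w) :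
    PreBisep (w • (triM d 1 ((d:ℂ) • Phi d) ((d:ℂ) • Phi d) + triM d 1 1 1)) := by
  have h := preBisep_cut1 d ((Fin d × Fin d) × Kt (Fin d × Fin d))
    (fun t => w * cw (Fin d × Fin d) t.2)
    (fun t => mul_nonneg hw (cw_nonneg _))
    (fun t e => (if e.1 = t.1.1 then 1 else 0) * (if e.2 = t.1.2 then 1 else 0))
    (fun t ab => cL t.2 ab)
    (fun t cc => cR t.2 cc)
  convert h using 1
  ext x y
  rw [Matrix.sum_apply]
  have hs := sum_factor ((w : ℂ))
    (fun mn : Fin d × Fin d =>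
      ((if x.1.1 = mn.1 then (1:ℂ) else 0) * (if x.2.1.1 = mn.2 then 1 else 0))
        * star ((if y.1.1 = mn.1 then (1:ℂ) else 0) * (if y.2.1.1 = mn.2 then 1 else 0)))
    (fun s : Kt (Fin d × Fin d) => ((cw (Fin d × Fin d) s : ℝ) : ℂ) *
      ((cL s (x.1.2, x.2.1.2) * cR s x.2.2) * star (cL s (y.1.2, y.2.1.2) * cR s y.2.2)))
    (fun st => (((w * cw (Fin d × Fin d) st.2 : ℝ) : ℂ) •
      vecProj (fun x : (Fin d × Fin d) × (Fin d × Fin d) × (Fin d × Fin d) =>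
        ((if x.1.1 = st.1.1 then (1:ℂ) else 0) * (if x.2.1.1 = st.1.2 then 1 else 0)) *
          cL st.2 (x.1.2, x.2.1.2) * cR st.2 x.2.2)) x y)
    (fun s t => by
      simp only [vecProj, Matrix.of_apply, Matrix.smul_apply, smul_eq_mul, star_mul']
      push_cast
      ring)
  rw [hs, ddPair, key,
    iteEqPair (x.1.2, x.2.1.2) x.2.2, iteEqPair (y.1.2, y.2.1.2) y.2.2,
    iteEqPair (x.1.2, x.2.1.2) (y.1.2, y.2.1.2), iteEqPair x.2.2 y.2.2]
  simp only [Matrix.smul_apply, Matrix.add_apply, triM, Matrix.of_apply, one_apply_pair,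
    smul_eq_mul, Complex.real_smul]
  rw [phi_apply d hd, phi_apply d hd]
  ring

lemma iteSymm {A : Type*} [DecidableEq A] (a b : A) :
    (if a = b then (1:ℂ) else 0) = (if b = a then 1 else 0) := by
  by_cases h : a = b
  · simp [h]
  · simp [h, Ne.symm h]

lemma atomC3 (hd : 0 < d) (w : ℝ) (hw : 0 ≤ w) :
    PreBisep (w • (triM d ((d:ℂ) • Phi d) ((d:ℂ) • Phi d) 1 + triM d 1 1 1)) := by
  have h := preBisep_cut3 d ((Fin d × Fin d) × Kt (Fin d × Fin d))
    (fun t => w * cw (Fin d × Fin d) t.2)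
    (fun t => mul_nonneg hw (cw_nonneg _))
    (fun t e => (if e.1 = t.1.1 then 1 else 0) * (if e.2 = t.1.2 then 1 else 0))
    (fun t a => cL t.2 a)
    (fun t bc => cR t.2 bc)
  convert h using 1
  ext x y
  rw [Matrix.sum_apply]
  have hs := sum_factor ((w : ℂ))
    (fun mn : Fin d × Fin d =>
      ((if x.2.1.2 = mn.1 then (1:ℂ) else 0) * (if x.2.2.2 = mn.2 then 1 else 0))
        * star ((if y.2.1.2 = mn.1 then (1:ℂ) else 0) * (if y.2.2.2 = mn.2 then 1 else 0)))
    (fun s : Kt (Fin d × Fin d) => ((cw (Fin d × Fin d) s : ℝ) : ℂ) *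
      ((cL s x.1 * cR s (x.2.1.1, x.2.2.1)) * star (cL s y.1 * cR s (y.2.1.1, y.2.2.1))))
    (fun st => (((w * cw (Fin d × Fin d) st.2 : ℝ) : ℂ) •
      vecProj (fun x : (Fin d × Fin d) × (Fin d × Fin d) × (Fin d × Fin d) =>
        ((if x.2.1.2 = st.1.1 then (1:ℂ) else 0) * (if x.2.2.2 = st.1.2 then 1 else 0)) *
          cL st.2 x.1 * cR st.2 (x.2.1.1, x.2.2.1))) x y)
    (fun s t => by
      simp only [vecProj, Matrix.of_apply, Matrix.smul_apply, smul_eq_mul, star_mul']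
      push_cast
      ring)
  rw [hs, ddPair, key,
    iteEqPair x.1 (x.2.1.1, x.2.2.1), iteEqPair y.1 (y.2.1.1, y.2.2.1),
    iteEqPair x.1 y.1, iteEqPair (x.2.1.1, x.2.2.1) (y.2.1.1, y.2.2.1)]
  simp only [Matrix.smul_apply, Matrix.add_apply, triM, Matrix.of_apply, one_apply_pair,
    smul_eq_mul, Complex.real_smul]
  rw [phi_apply d hd, phi_apply d hd]
  ring

lemma atomC2 (hd : 0 < d) (w : ℝ) (hw : 0 ≤ w) :
    PreBisep (w • (triM d ((d:ℂ) • Phi d) 1 ((d:ℂ) • Phi d) + triM d 1 1 1)) := by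
  have h := preBisep_cut2 d ((Fin d × Fin d) × Kt (Fin d × Fin d))
    (fun t => w * cw (Fin d × Fin d) t.2)
    (fun t => mul_nonneg hw (cw_nonneg _))
    (fun t e => (if e.1 = t.1.1 then 1 else 0) * (if e.2 = t.1.2 then 1 else 0))
    (fun t b => cL t.2 b)
    (fun t ac => cR t.2 ac)
  convert h using 1
  ext x y
  rw [Matrix.sum_apply]
  have hs := sum_factor ((w : ℂ))
    (fun mn : Fin d × Fin d =>
      ((if x.1.2 = mn.1 then (1:ℂ) else 0) * (if x.2.2.1 = mn.2 then 1 else 0))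
        * star ((if y.1.2 = mn.1 then (1:ℂ) else 0) * (if y.2.2.1 = mn.2 then 1 else 0)))
    (fun s : Kt (Fin d × Fin d) => ((cw (Fin d × Fin d) s : ℝ) : ℂ) *
      ((cL s x.2.1 * cR s (x.1.1, x.2.2.2)) * star (cL s y.2.1 * cR s (y.1.1, y.2.2.2))))
    (fun st => (((w * cw (Fin d × Fin d) st.2 : ℝ) : ℂ) •
      vecProj (fun x : (Fin d × Fin d) × (Fin d × Fin d) × (Fin d × Fin d) =>
        ((if x.1.2 = st.1.1 then (1:ℂ) else 0) * (if x.2.2.1 = st.1.2 then 1 else 0)) *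
          cL st.2 x.2.1 * cR st.2 (x.1.1, x.2.2.2))) x y)
    (fun s t => by
      simp only [vecProj, Matrix.of_apply, Matrix.smul_apply, smul_eq_mul, star_mul']
      push_cast
      ring)
  rw [hs, ddPair, key,
    iteEqPair x.2.1 (x.1.1, x.2.2.2), iteEqPair y.2.1 (y.1.1, y.2.2.2),
    iteEqPair x.2.1 y.2.1, iteEqPair (x.1.1, x.2.2.2) (y.1.1, y.2.2.2),
    iteSymm x.2.1.1 x.1.1, iteSymm y.2.1.1 y.1.1]
  simp only [Matrix.smul_apply, Matrix.add_apply, triM, Matrix.of_apply, one_apply_pair,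
    smul_eq_mul, Complex.real_smul]
  rw [phi_apply d hd, phi_apply d hd]
  ring

lemma main_split (hd : 0 < d) (p : ℝ) :
    triangleNet d p =
      (p^3/(3*(d:ℝ)^2)) • triM d (Phi d) ((d:ℂ) • Phi d + 1) ((d:ℂ) • Phi d + 1)
    + (p^3/(3*(d:ℝ)^2)) • triM d ((d:ℂ) • Phi d + 1) (Phi d) ((d:ℂ) • Phi d + 1)
    + (p^3/(3*(d:ℝ)^2)) • triM d ((d:ℂ) • Phi d + 1) ((d:ℂ) • Phi d + 1) (Phi d)
    + (p*(3*(1-p)^2 - (d:ℝ)^2*p^2)/(3*(d:ℝ)^4)) • triM d (Phi d) 1 1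
    + (p*(3*(1-p)^2 - (d:ℝ)^2*p^2)/(3*(d:ℝ)^4)) • triM d 1 (Phi d) 1
    + (p*(3*(1-p)^2 - (d:ℝ)^2*p^2)/(3*(d:ℝ)^4)) • triM d 1 1 (Phi d)
    + (p^2*(3*(1-p)-2*(d:ℝ)*p)/(3*(d:ℝ)^4)) •
        (triM d 1 ((d:ℂ) • Phi d) ((d:ℂ) • Phi d) + triM d 1 1 1)
    + (p^2*(3*(1-p)-2*(d:ℝ)*p)/(3*(d:ℝ)^4)) •
        (triM d ((d:ℂ) • Phi d) 1 ((d:ℂ) • Phi d) + triM d 1 1 1)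
    + (p^2*(3*(1-p)-2*(d:ℝ)*p)/(3*(d:ℝ)^4)) •
        (triM d ((d:ℂ) • Phi d) ((d:ℂ) • Phi d) 1 + triM d 1 1 1)
    + (((1-p) - (d:ℝ)*p)^2*((1-p)+2*(d:ℝ)*p)/((d:ℝ)^6)) • triM d 1 1 1 := by
  have hdc : (d:ℂ) ≠ 0 := by
    exact_mod_cast Nat.cast_ne_zero.2 hd.ne'
  ext x y
  simp only [triangleNet, isoState, Phi, triM, Matrix.of_apply, Matrix.add_apply,
    Matrix.smul_apply, smul_eq_mul, Complex.real_smul]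
  generalize vecProj (maxEntVec d) (x.1.1, x.2.1.1) (y.1.1, y.2.1.1) = z1
  generalize vecProj (maxEntVec d) (x.1.2, x.2.2.1) (y.1.2, y.2.2.1) = z2
  generalize vecProj (maxEntVec d) (x.2.1.2, x.2.2.2) (y.2.1.2, y.2.2.2) = z3
  generalize (1 : Matrix (Fin d × Fin d) (Fin d × Fin d) ℂ) (x.1.1, x.2.1.1) (y.1.1, y.2.1.1) = n1
  generalize (1 : Matrix (Fin d × Fin d) (Fin d × Fin d) ℂ) (x.1.2, x.2.2.1) (y.1.2, y.2.2.1) = n2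
  generalize (1 : Matrix (Fin d × Fin d) (Fin d × Fin d) ℂ) (x.2.1.2, x.2.2.2) (y.2.1.2, y.2.2.2) = n3
  push_cast
  field_simp
  ring

lemma trace_iso (hd : 0 < d) (p : ℝ) : (isoState d p).trace = 1 := by
  have hdr : ((d:ℝ)) ≠ 0 := Nat.cast_ne_zero.2 hd.ne'
  have htr1 : (vecProj (maxEntVec d)).trace = 1 := by
    have hc : ((((Real.sqrt d)⁻¹ : ℝ) : ℂ)) * star ((((Real.sqrt d)⁻¹ : ℝ) : ℂ))
        = (((d:ℝ)⁻¹ : ℝ) : ℂ) := by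
      rw [Complex.star_def, Complex.conj_ofReal, ← Complex.ofReal_mul]
      congr 1
      rw [← mul_inv, Real.mul_self_sqrt (by positivity)]
    simp only [Matrix.trace, Matrix.diag, vecProj, Matrix.of_apply, maxEntVec]
    rw [Fintype.sum_prod_type]
    have hrow : ∀ i : Fin d, (∑ j : Fin d,
        (if i = j then (((Real.sqrt d)⁻¹ : ℝ) : ℂ) else 0) *
          star (if i = j then (((Real.sqrt d)⁻¹ : ℝ) : ℂ) else 0)) = (((d:ℝ)⁻¹ : ℝ) : ℂ) := by
      intro i
      rw [Finset.sum_eq_single i]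
      · have hss : ((Real.sqrt d : ℝ) : ℂ)⁻¹ * ((Real.sqrt d : ℝ) : ℂ)⁻¹ = (((d:ℝ) : ℂ))⁻¹ := by
          rw [← mul_inv, ← Complex.ofReal_mul, Real.mul_self_sqrt (by positivity)]
        simp [Complex.star_def, Complex.conj_ofReal, Complex.ofReal_inv, hss]
      · intro j _ hj
        simp [Ne.symm hj]
      · simp
    rw [Finset.sum_congr rfl fun i _ => hrow i, Finset.sum_const, Finset.card_univ,
      Fintype.card_fin, nsmul_eq_mul]
    rw [← Complex.ofReal_natCast, ← Complex.ofReal_mul, mul_inv_cancel₀ hdr]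
    norm_num
  simp only [isoState, Matrix.trace_add, Matrix.trace_smul, htr1, Matrix.trace_one]
  rw [smul_eq_mul, smul_eq_mul, mul_one]
  have hcard : (Fintype.card (Fin d × Fin d) : ℂ) = ((d:ℂ))^2 := by
    rw [Fintype.card_prod, Fintype.card_fin]
    push_cast
    ring
  rw [hcard]
  have hdc : ((d:ℂ))^2 ≠ 0 := by
    exact_mod_cast pow_ne_zero 2 (Nat.cast_ne_zero.2 hd.ne' : (d:ℂ) ≠ 0)
  push_cast
  field_simp
  ring

lemma trace_triM (P Q R : Matrix (Fin d × Fin d) (Fin d × Fin d) ℂ) :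
    (triM d P Q R).trace = P.trace * Q.trace * R.trace := by
  classical
  have hbij : Function.Bijective (fun x : (Fin d × Fin d) × (Fin d × Fin d) × (Fin d × Fin d) =>
      (((x.1.1, x.2.1.1), (x.1.2, x.2.2.1), (x.2.1.2, x.2.2.2)) :
        (Fin d × Fin d) × (Fin d × Fin d) × (Fin d × Fin d))) := by
    constructor
    · rintro ⟨⟨a1, a2⟩, ⟨b1, b2⟩, c1, c2⟩ ⟨⟨a1', a2'⟩, ⟨b1', b2'⟩, c1', c2'⟩ h
      simp only [Prod.ext_iff] at h ⊢
      tauto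
    · rintro ⟨⟨a1, b1⟩, ⟨a2, c1⟩, b2, c2⟩
      exact ⟨((a1, a2), (b1, b2), (c1, c2)), rfl⟩
  have h1 := Fintype.sum_bijective _ hbij (fun x => triM d P Q R x x)
      (fun u => P u.1 u.1 * Q u.2.1 u.2.1 * R u.2.2 u.2.2) (fun x => rfl)
  show ∑ x, triM d P Q R x x = _
  rw [h1]
  simp only [Matrix.trace, Matrix.diag]
  rw [Fintype.sum_prod_type]
  have hrow : ∀ a : Fin d × Fin d,
      (∑ v : (Fin d × Fin d) × (Fin d × Fin d), P a a * Q v.1 v.1 * R v.2 v.2)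
      = P a a * ((∑ b : Fin d × Fin d, Q b b) * (∑ c : Fin d × Fin d, R c c)) := by
    intro a
    rw [Fintype.sum_prod_type, Finset.sum_mul_sum, Finset.mul_sum]
    refine Finset.sum_congr rfl fun b _ => ?_
    rw [Finset.mul_sum]
    refine Finset.sum_congr rfl fun c _ => ?_
    ring
  rw [Finset.sum_congr rfl fun a _ => hrow a, ← Finset.sum_mul]
  ring

lemma trace_triangleNet (hd : 0 < d) (p : ℝ) : (triangleNet d p).trace = 1 := by
  have : triangleNet d p = triM d (isoState d p) (isoState d p) (isoState d p) := rfl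
  rw [this, trace_triM, trace_iso d hd]
  norm_num

end Tri

end TriAux

/-- **Biseparability of the triangle network of isotropic states.** If
`p ≤ 3/(3 + 2d)`, the triangle network of `d`-dimensional isotropic states with
visibility `p`, viewed as a tripartite state of `A = (A₁, A₂)`, `B = (B₁, B₂)`,
`C = (C₁, C₂)`, is biseparable. -/
theorem triangle_network_biseparable (d : ℕ) (hd : 2 ≤ d) (p : ℝ)
    (hp0 : 0 ≤ p) (hp1 : p ≤ 1) (hp : p ≤ 3 / (3 + 2 * d : ℝ)) :
    Bisep3 (triangleNet d p) := by
  have hd0 : 0 < d := by omega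
  have hdr : (0:ℝ) < d := by exact_mod_cast hd0
  have hp' : p * (3 + 2 * d) ≤ 3 := by
    rw [← le_div_iff₀ (by positivity)]
    exact hp
  have h3q : 2 * (d:ℝ) * p ≤ 3 * (1 - p) := by nlinarith
  have haa : 0 ≤ p^3/(3*(d:ℝ)^2) := by positivity
  have hbb : 0 ≤ p*(3*(1-p)^2 - (d:ℝ)^2*p^2)/(3*(d:ℝ)^4) := by
    apply div_nonneg _ (by positivity)
    apply mul_nonneg hp0
    have hsq : (2*(d:ℝ)*p)*(2*(d:ℝ)*p) ≤ (3*(1-p))*(3*(1-p)) :=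
      mul_self_le_mul_self (by positivity) h3q
    nlinarith [hsq]
  have hcc : 0 ≤ p^2*(3*(1-p)-2*(d:ℝ)*p)/(3*(d:ℝ)^4) := by
    apply div_nonneg _ (by positivity)
    apply mul_nonneg (by positivity)
    linarith
  have hff : 0 ≤ ((1-p) - (d:ℝ)*p)^2*((1-p)+2*(d:ℝ)*p)/((d:ℝ)^6) := by
    apply div_nonneg _ (by positivity)
    apply mul_nonneg (sq_nonneg _)
    have hdp : 0 ≤ (d:ℝ)*p := by positivity
    linarith
  have hpre : TriAux.PreBisep (triangleNet d p) := by
    rw [TriAux.main_split d hd0 p]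
    exact ((((((((((TriAux.atomA1 d hd0 _ haa).add (TriAux.atomA2 d hd0 _ haa)).add
      (TriAux.atomA3 d hd0 _ haa)).add (TriAux.atomB1 d hd0 _ hbb)).add
      (TriAux.atomB2 d hd0 _ hbb)).add (TriAux.atomB3 d hd0 _ hbb)).add
      (TriAux.atomC1 d hd0 _ hcc)).add (TriAux.atomC2 d hd0 _ hcc)).add
      (TriAux.atomC3 d hd0 _ hcc)).add (TriAux.atomF d hd0 _ hff))
  haveI : Nonempty (Fin d × Fin d) := ⟨(⟨0, hd0⟩, ⟨0, hd0⟩)⟩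
  exact hpre.bisep3 (TriAux.trace_triangleNet d hd0 p)
end
end

section
/- Classical agreement theorem: let Ω be a finite set, 𝖯 a probability measure on Ω, and E_A, E_B ⊆ Ω perfectly correlated events, i.e. 𝖯(E_A∖E_B) = 𝖯(E_B∖E_A) = 0. Let 𝒫_A, 𝒫_B be partitions of Ω such that every nonempty intersection of a cell of 𝒫_A with a cell of 𝒫_B has positive probability. For q_A, q_B ∈ [0,1] define A₀ = {ω : 𝖯(E_B | 𝒫_A(ω)) = q_A}, B₀ = {ω : 𝖯(E_A | 𝒫_B(ω)) = q_B}, and recursively A_{n+1} = {ω ∈ A_n : 𝖯(B_n | 𝒫_A(ω)) = 1}, B_{n+1} = {ω ∈ B_n : 𝖯(A_n | 𝒫_B(ω)) = 1}. If there exists ω* ∈ Ω with ω* ∈ A_n ∩ B_n for every n ∈ ℕ, then q_A = q_B. -/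
open Finset

attribute [local instance] Classical.propDecidable
set_option linter.unusedSectionVars false
set_option maxHeartbeats 1000000

noncomputable section

/-- The probability of the event `E` under the weight function `p`. -/
def prMass {Ω : Type*} (p : Ω → ℝ) (E : Finset Ω) : ℝ := ∑ ω ∈ E, p ω

namespace AgreeAux

variable {Ω : Type*} [Fintype Ω] [DecidableEq Ω] {p : Ω → ℝ}

lemma prMass_nonneg (hp : ∀ ω, 0 ≤ p ω) (E : Finset Ω) : 0 ≤ prMass p E :=
  Finset.sum_nonneg fun ω _ => hp ω

lemma prMass_mono (hp : ∀ ω, 0 ≤ p ω) {E F : Finset Ω} (h : E ⊆ F) :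
    prMass p E ≤ prMass p F :=
  Finset.sum_le_sum_of_subset_of_nonneg h fun ω _ _ => hp ω

lemma prMass_eq_zero (hp : ∀ ω, 0 ≤ p ω) {E F : Finset Ω} (h : E ⊆ F)
    (hF : prMass p F = 0) : prMass p E = 0 :=
  le_antisymm (hF ▸ prMass_mono hp h) (prMass_nonneg hp E)

lemma prMass_split (p : Ω → ℝ) (E F : Finset Ω) :
    prMass p E = prMass p (E ∩ F) + prMass p (E \ F) := by
  rw [prMass, prMass, prMass, ← Finset.sum_union disjoint_inf_sdiff]
  congr 1
  ext x
  simp only [mem_union, mem_inter, mem_sdiff]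
  tauto

/-- The cells of a partition indexed over a finset are pairwise disjoint. -/
lemma cells_pairwiseDisjoint (T : Finset Ω) (PA : Ω → Finset Ω)
    (hPAcell : ∀ ω ω', ω' ∈ PA ω → PA ω' = PA ω) (g : Finset Ω → Finset Ω)
    (hg : ∀ C, g C ⊆ C) :
    (↑(T.image PA) : Set (Finset Ω)).PairwiseDisjoint g := by
  intro C hC C' hC' hne
  simp only [coe_image, Set.mem_image, mem_coe] at hC hC'
  obtain ⟨a, -, rfl⟩ := hC
  obtain ⟨a', -, rfl⟩ := hC'
  refine Finset.disjoint_left.2 fun x hx hx' => hne ?_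
  have h1 := hPAcell a x (hg _ hx)
  have h2 := hPAcell a' x (hg _ hx')
  rw [← h1, ← h2]

lemma prMass_biUnion (T : Finset Ω) (PA : Ω → Finset Ω)
    (hPAcell : ∀ ω ω', ω' ∈ PA ω → PA ω' = PA ω) (g : Finset Ω → Finset Ω)
    (hg : ∀ C, g C ⊆ C) :
    prMass p ((T.image PA).biUnion g) = ∑ C ∈ T.image PA, prMass p (g C) :=
  Finset.sum_biUnion (cells_pairwiseDisjoint T PA hPAcell g hg)

end AgreeAux

def agreeSets {Ω : Type*} [Fintype Ω] [DecidableEq Ω] (p : Ω → ℝ)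
    (PA PB : Ω → Finset Ω) (EA EB : Finset Ω) (qA qB : ℝ) :
    ℕ → Finset Ω × Finset Ω
  | 0 => (univ.filter fun ω => prMass p (EB ∩ PA ω) / prMass p (PA ω) = qA,
          univ.filter fun ω => prMass p (EA ∩ PB ω) / prMass p (PB ω) = qB)
  | n + 1 =>
      let s := agreeSets p PA PB EA EB qA qB n
      (s.1.filter fun ω => prMass p (s.2 ∩ PA ω) / prMass p (PA ω) = 1,
       s.2.filter fun ω => prMass p (s.1 ∩ PB ω) / prMass p (PB ω) = 1)

/-- **Classical agreement theorem (Aumann).** Let `Ω` be a finite probability space,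
`E_A`, `E_B` perfectly correlated events, and `𝒫_A`, `𝒫_B` partitions of `Ω` (given by
their cell maps) such that every nonempty intersection of a cell of `𝒫_A` with a cell of
`𝒫_B` has positive probability. If at some state `ωs` it is common certainty that Alice
assigns probability `q_A` to `E_B` and Bob assigns probability `q_B` to `E_A`, then
`q_A = q_B`. -/
theorem classical_agreement {Ω : Type*} [Fintype Ω] [DecidableEq Ω]
    (p : Ω → ℝ) (hp : ∀ ω, 0 ≤ p ω) (hsum : ∑ ω, p ω = 1)
    (EA EB : Finset Ω)
    (hcorrAB : prMass p (EA \ EB) = 0) (hcorrBA : prMass p (EB \ EA) = 0)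
    (PA PB : Ω → Finset Ω)
    (hPAmem : ∀ ω, ω ∈ PA ω) (hPAcell : ∀ ω ω', ω' ∈ PA ω → PA ω' = PA ω)
    (hPBmem : ∀ ω, ω ∈ PB ω) (hPBcell : ∀ ω ω', ω' ∈ PB ω → PB ω' = PB ω)
    (hpos : ∀ ω ω', (PA ω ∩ PB ω').Nonempty → 0 < prMass p (PA ω ∩ PB ω'))
    (qA qB : ℝ) (hqA : qA ∈ Set.Icc (0 : ℝ) 1) (hqB : qB ∈ Set.Icc (0 : ℝ) 1)
    (ωs : Ω)
    (hcc : ∀ n : ℕ, ωs ∈ (agreeSets p PA PB EA EB qA qB n).1 ∧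
                    ωs ∈ (agreeSets p PA PB EA EB qA qB n).2) :
    qA = qB := by
  open AgreeAux in
  set f := agreeSets p PA PB EA EB qA qB with hf
  -- one-step descriptions
  have hstep1 : ∀ n, (f (n + 1)).1 =
      (f n).1.filter fun ω => prMass p ((f n).2 ∩ PA ω) / prMass p (PA ω) = 1 :=
    fun n => rfl
  have hstep2 : ∀ n, (f (n + 1)).2 =
      (f n).2.filter fun ω => prMass p ((f n).1 ∩ PB ω) / prMass p (PB ω) = 1 :=
    fun n => rfl
  have hsub1 : ∀ n, (f (n + 1)).1 ⊆ (f n).1 := fun n => (hstep1 n) ▸ filter_subset _ _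
  have hsub2 : ∀ n, (f (n + 1)).2 ⊆ (f n).2 := fun n => (hstep2 n) ▸ filter_subset _ _
  have hchain1 : ∀ n, (f n).1 ⊆ (f 0).1 := by
    intro n; induction n with
    | zero => exact subset_rfl
    | succ k ih => exact (hsub1 k).trans ih
  have hchain2 : ∀ n, (f n).2 ⊆ (f 0).2 := by
    intro n; induction n with
    | zero => exact subset_rfl
    | succ k ih => exact (hsub2 k).trans ih
  -- stabilization
  have hex : ∃ N, ((f (N + 1)).1.card + (f (N + 1)).2.card) =
      ((f N).1.card + (f N).2.card) := by
    by_contra h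
    push_neg at h
    have hlt : ∀ n, (f (n + 1)).1.card + (f (n + 1)).2.card <
        (f n).1.card + (f n).2.card := fun n =>
      lt_of_le_of_ne (add_le_add (card_le_card (hsub1 n)) (card_le_card (hsub2 n))) (h n)
    have hbound : ∀ n, (f n).1.card + (f n).2.card + n ≤
        (f 0).1.card + (f 0).2.card := by
      intro n; induction n with
      | zero => omega
      | succ k ih => have := hlt k; omega
    have := hbound ((f 0).1.card + (f 0).2.card + 1)
    omega
  obtain ⟨N, hN⟩ := hex
  have hcard1 := card_le_card (hsub1 N)
  have hcard2 := card_le_card (hsub2 N)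
  have hAeq : (f (N + 1)).1 = (f N).1 :=
    eq_of_subset_of_card_le (hsub1 N) (by omega)
  have hBeq : (f (N + 1)).2 = (f N).2 :=
    eq_of_subset_of_card_le (hsub2 N) (by omega)
  set A := (f N).1 with hA
  set B := (f N).2 with hB
  -- positivity of cells
  have hposA : ∀ ω, 0 < prMass p (PA ω) := fun ω =>
    lt_of_lt_of_le (hpos ω ω ⟨ω, mem_inter.2 ⟨hPAmem ω, hPBmem ω⟩⟩)
      (prMass_mono hp inter_subset_left)
  have hposB : ∀ ω, 0 < prMass p (PB ω) := fun ω =>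
    lt_of_lt_of_le (hpos ω ω ⟨ω, mem_inter.2 ⟨hPAmem ω, hPBmem ω⟩⟩)
      (prMass_mono hp inter_subset_right)
  -- fixed-point properties
  have hA0 : ∀ ω ∈ A, prMass p (EB ∩ PA ω) = qA * prMass p (PA ω) := by
    intro ω hω
    have h := (mem_filter.1 (hchain1 N hω)).2
    rw [div_eq_iff (ne_of_gt (hposA ω))] at h
    exact h
  have hB0 : ∀ ω ∈ B, prMass p (EA ∩ PB ω) = qB * prMass p (PB ω) := by
    intro ω hω
    have h := (mem_filter.1 (hchain2 N hω)).2
    rw [div_eq_iff (ne_of_gt (hposB ω))] at h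
    exact h
  have hAfix : ∀ ω ∈ A, prMass p (PA ω \ B) = 0 := by
    intro ω hω
    rw [← hAeq, hstep1 N] at hω
    have h1 := (mem_filter.1 hω).2
    have h2 : prMass p (B ∩ PA ω) = prMass p (PA ω) := by
      rw [div_eq_iff (ne_of_gt (hposA ω)), one_mul] at h1
      exact h1
    have h3 := prMass_split p (PA ω) B
    rw [inter_comm] at h2
    linarith
  have hBfix : ∀ ω ∈ B, prMass p (PB ω \ A) = 0 := by
    intro ω hω
    rw [← hBeq, hstep2 N] at hω
    have h1 := (mem_filter.1 hω).2
    have h2 : prMass p (A ∩ PB ω) = prMass p (PB ω) := by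
      rw [div_eq_iff (ne_of_gt (hposB ω)), one_mul] at h1
      exact h1
    have h3 := prMass_split p (PB ω) A
    rw [inter_comm] at h2
    linarith
  -- the common-certainty blankets
  set cellsA := A.image PA with hcellsA
  set cellsB := B.image PB with hcellsB
  set Abar := cellsA.biUnion id with hAbar
  set Bbar := cellsB.biUnion id with hBbar
  have hAsub : A ⊆ Abar := fun ω hω =>
    mem_biUnion.2 ⟨PA ω, mem_image_of_mem PA hω, hPAmem ω⟩
  have hBsub : B ⊆ Bbar := fun ω hω =>
    mem_biUnion.2 ⟨PB ω, mem_image_of_mem PB hω, hPBmem ω⟩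
  -- computations over cells
  have hsumA : prMass p Abar = ∑ C ∈ cellsA, prMass p C :=
    prMass_biUnion A PA hPAcell id fun C => subset_rfl
  have hsumB : prMass p Bbar = ∑ C ∈ cellsB, prMass p C :=
    prMass_biUnion B PB hPBcell id fun C => subset_rfl
  have hEBA : prMass p (EB ∩ Abar) = qA * prMass p Abar := by
    have he : EB ∩ Abar = cellsA.biUnion fun C => EB ∩ C := by
      rw [hAbar]; exact Finset.inter_biUnion EB cellsA id
    rw [he, prMass_biUnion A PA hPAcell (fun D => EB ∩ D) fun C => inter_subset_right,
      hsumA, Finset.mul_sum]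
    refine Finset.sum_congr rfl fun C hC => ?_
    obtain ⟨ω, hω, rfl⟩ := mem_image.1 hC
    exact hA0 ω hω
  have hEAB : prMass p (EA ∩ Bbar) = qB * prMass p Bbar := by
    have he : EA ∩ Bbar = cellsB.biUnion fun C => EA ∩ C := by
      rw [hBbar]; exact Finset.inter_biUnion EA cellsB id
    rw [he, prMass_biUnion B PB hPBcell (fun D => EA ∩ D) fun C => inter_subset_right,
      hsumB, Finset.mul_sum]
    refine Finset.sum_congr rfl fun C hC => ?_
    obtain ⟨ω, hω, rfl⟩ := mem_image.1 hC
    exact hB0 ω hω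
  have hAbarB : prMass p (Abar \ B) = 0 := by
    have he : Abar \ B = cellsA.biUnion fun C => C \ B := by
      ext x
      simp only [hAbar, mem_sdiff, mem_biUnion, id_eq]
      constructor
      · rintro ⟨⟨C, hC, hx⟩, hxB⟩; exact ⟨C, hC, hx, hxB⟩
      · rintro ⟨C, hC, hx, hxB⟩; exact ⟨⟨C, hC, hx⟩, hxB⟩
    rw [he, prMass_biUnion A PA hPAcell (fun D => D \ B) fun C => sdiff_subset]
    refine Finset.sum_eq_zero fun C hC => ?_
    obtain ⟨ω, hω, rfl⟩ := mem_image.1 hC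
    exact hAfix ω hω
  have hBbarA : prMass p (Bbar \ A) = 0 := by
    have he : Bbar \ A = cellsB.biUnion fun C => C \ A := by
      ext x
      simp only [hBbar, mem_sdiff, mem_biUnion, id_eq]
      constructor
      · rintro ⟨⟨C, hC, hx⟩, hxB⟩; exact ⟨C, hC, hx, hxB⟩
      · rintro ⟨C, hC, hx, hxB⟩; exact ⟨⟨C, hC, hx⟩, hxB⟩
    rw [he, prMass_biUnion B PB hPBcell (fun D => D \ A) fun C => sdiff_subset]
    refine Finset.sum_eq_zero fun C hC => ?_
    obtain ⟨ω, hω, rfl⟩ := mem_image.1 hC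
    exact hBfix ω hω
  -- null-set bookkeeping
  have n1 : prMass p (Abar \ Bbar) = 0 :=
    prMass_eq_zero hp (sdiff_subset_sdiff subset_rfl hBsub) hAbarB
  have n2 : prMass p (Bbar \ Abar) = 0 :=
    prMass_eq_zero hp (sdiff_subset_sdiff subset_rfl hAsub) hBbarA
  set X := Abar ∩ Bbar with hX
  have e1 : prMass p Abar = prMass p X := by
    have := prMass_split p Abar Bbar; rw [n1] at this; linarith
  have e2 : prMass p Bbar = prMass p X := by
    have := prMass_split p Bbar Abar; rw [n2] at this
    have hc : Bbar ∩ Abar = X := inter_comm _ _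
    rw [hc] at this; linarith
  have e3 : prMass p (EB ∩ Abar) = prMass p (EB ∩ X) := by
    have hs := prMass_split p (EB ∩ Abar) Bbar
    have hz : prMass p ((EB ∩ Abar) \ Bbar) = 0 :=
      prMass_eq_zero hp (sdiff_subset_sdiff inter_subset_right subset_rfl) n1
    have hc : (EB ∩ Abar) ∩ Bbar = EB ∩ X := inter_assoc _ _ _
    rw [hz, hc] at hs; linarith
  have e4 : prMass p (EA ∩ Bbar) = prMass p (EA ∩ X) := by
    have hs := prMass_split p (EA ∩ Bbar) Abar
    have hz : prMass p ((EA ∩ Bbar) \ Abar) = 0 :=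
      prMass_eq_zero hp (sdiff_subset_sdiff inter_subset_right subset_rfl) n2
    have hc : (EA ∩ Bbar) ∩ Abar = EA ∩ X := by
      ext x; simp only [mem_inter, hX]; tauto
    rw [hz, hc] at hs; linarith
  have e5 : prMass p (EA ∩ X) = prMass p (EB ∩ X) := by
    have hs1 := prMass_split p (EA ∩ X) EB
    have hs2 := prMass_split p (EB ∩ X) EA
    have hz1 : prMass p ((EA ∩ X) \ EB) = 0 :=
      prMass_eq_zero hp (fun x hx => by
        simp only [mem_sdiff, mem_inter] at hx ⊢; tauto) hcorrAB
    have hz2 : prMass p ((EB ∩ X) \ EA) = 0 :=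
      prMass_eq_zero hp (fun x hx => by
        simp only [mem_sdiff, mem_inter] at hx ⊢; tauto) hcorrBA
    have hc : (EA ∩ X) ∩ EB = (EB ∩ X) ∩ EA := by
      ext x; simp only [mem_inter]; tauto
    rw [hz1, hc] at hs1
    rw [hz2] at hs2
    linarith
  -- positivity of X
  have hωsA : ωs ∈ A := (hcc N).1
  have hXpos : 0 < prMass p X := by
    rw [← e1]
    exact lt_of_lt_of_le (hposA ωs)
      (prMass_mono hp (fun x hx =>
        mem_biUnion.2 ⟨PA ωs, mem_image_of_mem PA hωsA, hx⟩))
  -- conclusion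
  have : qA * prMass p X = qB * prMass p X := by
    calc qA * prMass p X = qA * prMass p Abar := by rw [e1]
      _ = prMass p (EB ∩ Abar) := hEBA.symm
      _ = prMass p (EB ∩ X) := e3
      _ = prMass p (EA ∩ X) := e5.symm
      _ = prMass p (EA ∩ Bbar) := e4.symm
      _ = qB * prMass p Bbar := hEAB
      _ = qB * prMass p X := by rw [e2]
  exact mul_right_cancel₀ (ne_of_gt hXpos) this
end
end
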